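/- arXiv:1111.1251 — 6 statements merged into one kernel-verified Lean document; each statement's English description precedes it below -/
import Mathlib

section
/- For n hyperplanes in absolute general position in ℝˡ, the number of k-dimensional faces of the induced stratification is f_k = Σ_{j=0}^{k} C(n, l−j) · C(l−j, l−k). -/
open scoped Classical

/-- The dimension of a subset of `ℝˡ`: the rank of the direction of its affine span. -/
noncomputable def setDim (l : ℕ) (F : Set (Fin l → ℝ)) : ℕ :=
  Module.finrank ℝ (affineSpan ℝ F).direction

/-- The face of the arrangement `A` containing the point `x`: the connected component of
`x` in (the intersection of the hyperplanes through `x`) minus (the union of the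
hyperplanes missing `x`). -/
def arrFace (l : ℕ) (A : Finset (Set (Fin l → ℝ))) (x : Fin l → ℝ) : Set (Fin l → ℝ) :=
  connectedComponentIn
    (⋂₀ {H | H ∈ A ∧ x ∈ H} \ ⋃₀ {H | H ∈ A ∧ x ∉ H}) x

/-!
Each face is a convex cell, relatively open in a flat: the points lying on exactly the
hyperplanes of a set `Z` and on prescribed sides of the others. By general position such a cell
has dimension `l - #Z`, so the `k`-faces are the regions cut out, inside the `k`-dimensional
flats `⋂ Z` with `#Z = l - k`, by the `n - (l - k)` remaining hyperplanes, which are again in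
general position there. Deletion–restriction shows that `m` hyperplanes in general position in a
`d`-dimensional flat cut it into `∑_{i ≤ d} C(m, i)` regions, and
`C(n, l - j) C(l - j, l - k) = C(n, l - k) C(n - (l - k), k - j)` turns the total into the stated
sum.
-/

open Finset

theorem IsPreconnected.lt_iff_lt_of_forall_ne {α : Type*} [TopologicalSpace α] {s : Set α}
    (hs : IsPreconnected s) {g : α → ℝ} (hg : ContinuousOn g s) {a : ℝ}
    (hne : ∀ z ∈ s, g z ≠ a) {x y : α} (hx : x ∈ s) (hy : y ∈ s) : a < g x ↔ a < g y := by
  have key : ∀ {x y}, x ∈ s → y ∈ s → a < g x → a < g y := by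
    intro x y hx hy hax
    by_contra! hya
    obtain ⟨z, hz, hza⟩ := hs.intermediate_value hy hx hg ⟨hya, hax.le⟩
    exact hne z hz hza
  exact ⟨key hx hy, key hy hx⟩

section Topology

variable {E : Type*} [NormedAddCommGroup E] [NormedSpace ℝ E] {O : Set E}

theorem eventually_smul_add_mem (hO : IsOpen O) {x : E} (hx : x ∈ O) (v : E) :
    ∀ᶠ t in nhds (0 : ℝ), t • v + x ∈ O := by
  have hcont : Continuous fun t : ℝ => t • v + x := by fun_prop
  exact hcont.continuousAt.preimage_mem_nhds (by simpa using hO.mem_nhds hx)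

theorem AffineSubspace.direction_affineSpan_inter_isOpen (L : AffineSubspace ℝ E)
    (hO : IsOpen O) {x : E} (hxL : x ∈ L) (hxO : x ∈ O) :
    (affineSpan ℝ ((L : Set E) ∩ O)).direction = L.direction := by
  refine le_antisymm (AffineSubspace.direction_le ?_) fun v hv => ?_
  · simpa using affineSpan_mono ℝ (Set.inter_subset_left (s := (L : Set E)) (t := O))
  obtain ⟨t, ht, ht0⟩ := ((eventually_smul_add_mem hO hxO v).filter_mono
    nhdsWithin_le_nhds |>.and self_mem_nhdsWithin).exists (f := nhdsWithin 0 {0}ᶜ)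
  have hmem : t • v + x ∈ (L : Set E) ∩ O :=
    ⟨AffineSubspace.vadd_mem_of_mem_direction (L.direction.smul_mem t hv) hxL, ht⟩
  have := AffineSubspace.vsub_mem_direction (subset_affineSpan ℝ _ hmem)
    (subset_affineSpan ℝ _ ⟨hxL, hxO⟩)
  rwa [vsub_eq_sub, add_sub_cancel_right, Submodule.smul_mem_iff _ ht0] at this

variable {L : AffineSubspace ℝ E} {g : E →L[ℝ] ℝ} {a : ℝ}

theorem inter_lt_nonempty_and_inter_gt_nonempty (hO : IsOpen O) {x y : E} (hy : y ∈ L)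
    (hya : g y ≠ a) (hx : x ∈ (L : Set E) ∩ ({z | g z = a} ∩ O)) :
    ((L : Set E) ∩ ({z | g z < a} ∩ O)).Nonempty ∧
      ((L : Set E) ∩ ({z | a < g z} ∩ O)).Nonempty := by
  obtain ⟨hxL, hxa : g x = a, hxO⟩ := hx
  set v := (g (y - x))⁻¹ • (y - x)
  have hgv : g v = 1 := by
    have : g (y - x) ≠ 0 := by simpa [sub_eq_zero, hxa] using hya
    simpa [v] using inv_mul_cancel₀ this
  have hvL : v ∈ L.direction :=
    L.direction.smul_mem _ (AffineSubspace.vsub_mem_direction hy hxL)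
  have hline : ∀ t : ℝ, t • v + x ∈ L ∧ g (t • v + x) = a + t :=
    fun t => ⟨AffineSubspace.vadd_mem_of_mem_direction (L.direction.smul_mem t hvL) hxL,
      by simp [hgv, hxa, add_comm]⟩
  have hnear := eventually_smul_add_mem hO hxO v
  obtain ⟨s, hsO, hs0 : s < 0⟩ := ((hnear.filter_mono nhdsWithin_le_nhds).and
    self_mem_nhdsWithin).exists (f := nhdsWithin 0 (Set.Iio 0))
  obtain ⟨t, htO, ht0 : 0 < t⟩ := ((hnear.filter_mono nhdsWithin_le_nhds).and
    self_mem_nhdsWithin).exists (f := nhdsWithin 0 (Set.Ioi 0))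
  obtain ⟨hsL, hsa⟩ := hline s
  obtain ⟨htL, hta⟩ := hline t
  exact ⟨⟨_, hsL, show g _ < a by linarith, hsO⟩, ⟨_, htL, show a < g _ by linarith, htO⟩⟩

theorem inter_lt_nonempty_or_inter_gt_nonempty_iff (hO : IsOpen O)
    (hL : ∃ y ∈ L, g y ≠ a) :
    ((L : Set E) ∩ ({z | g z < a} ∩ O)).Nonempty ∨
      ((L : Set E) ∩ ({z | a < g z} ∩ O)).Nonempty ↔ ((L : Set E) ∩ O).Nonempty := by
  refine ⟨by rintro (⟨x, hxL, -, hxO⟩ | ⟨x, hxL, -, hxO⟩) <;> exact ⟨x, hxL, hxO⟩, ?_⟩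
  rintro ⟨x, hxL, hxO⟩
  obtain ⟨y, hyL, hya⟩ := hL
  rcases lt_trichotomy (g x) a with hxa | hxa | hxa
  · exact Or.inl ⟨x, hxL, hxa, hxO⟩
  · exact Or.inl (inter_lt_nonempty_and_inter_gt_nonempty hO hyL hya ⟨hxL, hxa, hxO⟩).1
  · exact Or.inr ⟨x, hxL, hxa, hxO⟩

theorem inter_lt_nonempty_and_inter_gt_nonempty_iff (hO : IsOpen O) (hOc : Convex ℝ O)
    (hL : ∃ y ∈ L, g y ≠ a) :
    ((L : Set E) ∩ ({z | g z < a} ∩ O)).Nonempty ∧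
      ((L : Set E) ∩ ({z | a < g z} ∩ O)).Nonempty ↔
      ((L : Set E) ∩ ({z | g z = a} ∩ O)).Nonempty := by
  refine ⟨?_, fun ⟨x, hx⟩ => ?_⟩
  · rintro ⟨⟨p, hpL, hpa : g p < a, hpO⟩, ⟨q, hqL, hqa : a < g q, hqO⟩⟩
    have hconn : IsPreconnected ((L : Set E) ∩ O) := (L.convex.inter hOc).isPreconnected
    obtain ⟨z, ⟨hzL, hzO⟩, hza⟩ := hconn.intermediate_value ⟨hpL, hpO⟩ ⟨hqL, hqO⟩
      g.continuous.continuousOn ⟨hpa.le, hqa.le⟩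
    exact ⟨z, hzL, hza, hzO⟩
  · obtain ⟨y, hyL, hya⟩ := hL
    exact inter_lt_nonempty_and_inter_gt_nonempty hO hyL hya hx

end Topology

theorem sum_range_choose_succ_succ (m e : ℕ) :
    ∑ j ∈ range (e + 2), (m + 1).choose j =
      ∑ j ∈ range (e + 2), m.choose j + ∑ j ∈ range (e + 1), m.choose j := by
  rw [sum_range_succ' _ (e + 1), sum_range_succ' (m.choose ·) (e + 1)]
  simp only [Nat.choose_succ_succ, sum_add_distrib, Nat.choose_zero_right]
  ring

theorem sum_choose_mul_choose_eq (n l k : ℕ) (hk : k ≤ l) :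
    ∑ j ∈ range (k + 1), n.choose (l - j) * (l - j).choose (l - k) =
      n.choose (l - k) * ∑ i ∈ range (k + 1), (n - (l - k)).choose i := by
  have hterm : ∀ j ∈ range (k + 1), n.choose (l - j) * (l - j).choose (l - k) =
      n.choose (l - k) * (n - (l - k)).choose (k - j) := by
    intro j hj
    have := mem_range_succ_iff.1 hj
    rw [Nat.choose_mul (by omega), show l - j - (l - k) = k - j by omega]
  rw [sum_congr rfl hterm, ← mul_sum]
  congr 1
  simpa using sum_range_reflect (fun i => (n - (l - k)).choose i) (k + 1)

namespace HyperplaneArrangement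

variable {E ι : Type*} [NormedAddCommGroup E] [NormedSpace ℝ E]
  {f : ι → E →L[ℝ] ℝ} {c : ι → ℝ}

section Regions

variable (f c) in
def flat (Z : Finset ι) : AffineSubspace ℝ E where
  carrier := {x | ∀ i ∈ Z, f i x = c i}
  smul_vsub_vadd_mem' t p₁ p₂ p₃ h₁ h₂ h₃ i hi := by
    simp [h₁ i hi, h₂ i hi, h₃ i hi]

variable (f c) in
def region (B P : Finset ι) : Set E :=
  {x | ∀ i ∈ B, if i ∈ P then c i < f i x else f i x < c i}

@[simp]
theorem mem_flat {Z : Finset ι} {x : E} : x ∈ flat f c Z ↔ ∀ i ∈ Z, f i x = c i := Iff.rfl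

@[simp]
theorem flat_empty : flat f c (∅ : Finset ι) = ⊤ := by
  ext x; simp

theorem flat_union (Z S : Finset ι) : flat f c (Z ∪ S) = flat f c Z ⊓ flat f c S := by
  ext x; simp [AffineSubspace.mem_inf_iff, or_imp, forall_and]

theorem coe_flat_singleton (i : ι) : (flat f c {i} : Set E) = {x | f i x = c i} := by
  ext x; simp

theorem region_eq_biInter (B P : Finset ι) :
    region f c B P = ⋂ i ∈ B, {x | if i ∈ P then c i < f i x else f i x < c i} := by
  ext x; simp [region]

variable (f c) in
theorem isOpen_region (B P : Finset ι) : IsOpen (region f c B P) := by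
  rw [region_eq_biInter]
  refine isOpen_biInter_finset fun i _ => ?_
  split_ifs
  · exact isOpen_lt continuous_const (f i).continuous
  · exact isOpen_lt (f i).continuous continuous_const

variable (f c) in
theorem convex_region (B P : Finset ι) : Convex ℝ (region f c B P) := by
  rw [region_eq_biInter]
  refine convex_iInter₂ fun i _ => ?_
  split_ifs
  · exact convex_halfSpace_gt (f i).toLinearMap.isLinear _
  · exact convex_halfSpace_lt (f i).toLinearMap.isLinear _

theorem region_insert_of_notMem {B P : Finset ι} {i : ι} (hi : i ∉ P) :
    region f c (insert i B) P = {x | f i x < c i} ∩ region f c B P := by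
  ext x; simp [region, hi]

theorem region_insert_insert {B P : Finset ι} {i : ι} (hi : i ∉ B) :
    region f c (insert i B) (insert i P) = {x | c i < f i x} ∩ region f c B P := by
  ext x
  have hP : ∀ j ∈ B, (j = i ∨ j ∈ P ↔ j ∈ P) := fun j hj => by
    simp [ne_of_mem_of_not_mem hj hi]
  simp +contextual [region, hP]

variable (f c) in
noncomputable def regionCount (L : AffineSubspace ℝ E) (B : Finset ι) : ℕ :=
  #{P ∈ B.powerset | ((L : Set E) ∩ region f c B P).Nonempty}

variable (f c) in
def InGeneralPosition (L : AffineSubspace ℝ E) (B : Finset ι) (d : ℕ) : Prop :=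
  ∀ S ⊆ B, (#S ≤ d → ((L ⊓ flat f c S : AffineSubspace ℝ E) : Set E).Nonempty ∧
      Module.finrank ℝ (L ⊓ flat f c S).direction = d - #S) ∧
    (d < #S → ((L ⊓ flat f c S : AffineSubspace ℝ E) : Set E) = ∅)

variable {L : AffineSubspace ℝ E} {B : Finset ι} {d : ℕ}

namespace InGeneralPosition

theorem mono {B' : Finset ι} (h : InGeneralPosition f c L B d) (hB : B' ⊆ B) :
    InGeneralPosition f c L B' d :=
  fun S hS => h S (hS.trans hB)

theorem nonempty (h : InGeneralPosition f c L B d) : (L : Set E).Nonempty := by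
  simpa using ((h ∅ (empty_subset B)).1 (Nat.zero_le d)).1

theorem finrank_direction (h : InGeneralPosition f c L B d) :
    Module.finrank ℝ L.direction = d := by
  have := ((h ∅ (empty_subset B)).1 (Nat.zero_le d)).2
  rwa [flat_empty, inf_top_eq] at this

theorem restrict {Z : Finset ι} (h : InGeneralPosition f c L B d) (hZ : Z ⊆ B)
    (hZd : #Z ≤ d) : InGeneralPosition f c (L ⊓ flat f c Z) (B \ Z) (d - #Z) := by
  intro S hS
  have hcard : #(Z ∪ S) = #Z + #S :=
    card_union_of_disjoint (disjoint_of_subset_right hS disjoint_sdiff)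
  have hZS := h (Z ∪ S) (union_subset hZ (hS.trans sdiff_subset))
  rw [flat_union, ← inf_assoc, hcard] at hZS
  exact ⟨fun hS => (hZS.1 (by omega)).imp_right (by omega), fun hS => hZS.2 (by omega)⟩

theorem exists_ne {i : ι} (h : InGeneralPosition f c L B d) (hi : i ∈ B) :
    ∃ y ∈ L, f i y ≠ c i := by
  by_contra! hL
  have hLi : L ⊓ flat f c {i} = L := inf_eq_left.2 fun y hy => by simpa using hL y hy
  have hi' := h {i} (singleton_subset_iff.2 hi)
  rw [hLi, card_singleton] at hi'
  rcases Nat.eq_zero_or_pos d with rfl | hd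
  · exact h.nonempty.ne_empty (hi'.2 zero_lt_one)
  · have := h.finrank_direction
    have := (hi'.1 hd).2
    omega

theorem card_le {S : Finset ι} (h : InGeneralPosition f c L B d) (hS : S ⊆ B)
    (hne : ((L ⊓ flat f c S : AffineSubspace ℝ E) : Set E).Nonempty) : #S ≤ d :=
  not_lt.1 fun hd => hne.ne_empty ((h S hS).2 hd)

end InGeneralPosition

theorem regionCount_of_coe_eq_empty (hL : (L : Set E) = ∅) : regionCount f c L B = 0 := by
  simp [regionCount, hL]

theorem regionCount_empty (hL : (L : Set E).Nonempty) : regionCount f c L ∅ = 1 := by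
  simp [regionCount, region, hL]

/-- Deletion–restriction: a region of `B` in `L` is cut by the hyperplane `i` into two regions
exactly when it meets that hyperplane, that is, when it is also a region of the restriction. -/
theorem regionCount_insert {i : ι} (hi : i ∉ B) (hL : ∃ y ∈ L, f i y ≠ c i) :
    regionCount f c L (insert i B) =
      regionCount f c L B + regionCount f c (L ⊓ flat f c {i}) B := by
  simp only [regionCount, card_filter]
  rw [sum_powerset_insert hi, ← sum_add_distrib, ← sum_add_distrib]
  refine sum_congr rfl fun Q hQ => ?_
  have hiQ : i ∉ Q := fun h => hi (mem_powerset.1 hQ h)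
  have hLi : ((L ⊓ flat f c {i} : AffineSubspace ℝ E) : Set E) =
      (L : Set E) ∩ {x | f i x = c i} := by
    rw [← coe_flat_singleton]; rfl
  rw [region_insert_of_notMem hiQ, region_insert_insert hi, hLi, Set.inter_assoc]
  have hor := inter_lt_nonempty_or_inter_gt_nonempty_iff (isOpen_region f c B Q) hL
  have hand := inter_lt_nonempty_and_inter_gt_nonempty_iff (isOpen_region f c B Q)
    (convex_region f c B Q) hL
  split_ifs <;> simp_all

theorem InGeneralPosition.regionCount_eq (h : InGeneralPosition f c L B d) :
    regionCount f c L B = ∑ j ∈ range (d + 1), (#B).choose j := by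
  induction B using Finset.induction_on generalizing L d with
  | empty => simp [regionCount_empty h.nonempty, sum_range_succ']
  | insert i B hi ih =>
    rw [regionCount_insert hi (h.exists_ne (mem_insert_self i B)),
      ih (h.mono (subset_insert i B)), card_insert_of_notMem hi]
    cases d with
    | zero =>
      have hempty := (h {i} (singleton_subset_iff.2 (mem_insert_self i B))).2 (by simp)
      simp [regionCount_of_coe_eq_empty hempty]
    | succ e =>
      have h' := h.restrict (singleton_subset_iff.2 (mem_insert_self i B)) (by simp)
      rw [insert_sdiff_of_mem _ (mem_singleton_self i), sdiff_singleton_eq_erase,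
        erase_eq_of_notMem hi, card_singleton, Nat.add_sub_cancel] at h'
      rw [ih h', sum_range_choose_succ_succ]

end Regions

section Cells

variable {A Z P : Finset ι} {x y : E}

variable (f c) in
noncomputable def zeroSet (A : Finset ι) (x : E) : Finset ι := {i ∈ A | f i x = c i}

variable (f c) in
noncomputable def posSet (A : Finset ι) (x : E) : Finset ι := {i ∈ A | c i < f i x}

variable (f c) in
def cell (A Z P : Finset ι) : Set E := (flat f c Z : Set E) ∩ region f c (A \ Z) P

variable (f c) in
noncomputable def cellPatterns (A : Finset ι) (r : ℕ) : Finset (Σ _ : Finset ι, Finset ι) :=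
  (A.powersetCard r).sigma fun Z => {P ∈ (A \ Z).powerset | (cell f c A Z P).Nonempty}

theorem mem_cellPatterns {r : ℕ} {p : Σ _ : Finset ι, Finset ι} :
    p ∈ cellPatterns f c A r ↔
      p.1 ⊆ A ∧ #p.1 = r ∧ p.2 ⊆ A \ p.1 ∧ (cell f c A p.1 p.2).Nonempty := by
  simp [cellPatterns, and_assoc]

theorem posSet_subset : posSet f c A x ⊆ A \ zeroSet f c A x := fun _ hi =>
  mem_sdiff.2 ⟨(mem_filter.1 hi).1, fun h => (mem_filter.1 hi).2.ne' (mem_filter.1 h).2⟩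

theorem ne_of_mem_region {B : Finset ι} {i : ι} (hy : y ∈ region f c B P) (hi : i ∈ B) :
    f i y ≠ c i := by
  have := hy i hi
  split_ifs at this
  exacts [this.ne', this.ne]

variable (f c) in
theorem mem_cell_self (A : Finset ι) (x : E) :
    x ∈ cell f c A (zeroSet f c A x) (posSet f c A x) := by
  refine ⟨fun i hi => (mem_filter.1 hi).2, fun i hi => ?_⟩
  obtain ⟨hiA, hiZ⟩ := mem_sdiff.1 hi
  have hne : f i x ≠ c i := fun h => hiZ (mem_filter.2 ⟨hiA, h⟩)
  split_ifs with hiP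
  · exact (mem_filter.1 hiP).2
  · exact lt_of_le_of_ne (not_lt.1 fun h => hiP (mem_filter.2 ⟨hiA, h⟩)) hne

theorem zeroSet_eq_and_posSet_eq_of_mem_cell (hZ : Z ⊆ A) (hP : P ⊆ A \ Z)
    (hy : y ∈ cell f c A Z P) : zeroSet f c A y = Z ∧ posSet f c A y = P := by
  obtain ⟨hyZ, hyR⟩ := hy
  have hout : ∀ i ∈ A, i ∉ Z → i ∈ A \ Z := fun i hiA hiZ => mem_sdiff.2 ⟨hiA, hiZ⟩
  constructor
  · ext i
    refine ⟨fun hi => ?_, fun hi => mem_filter.2 ⟨hZ hi, hyZ i hi⟩⟩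
    obtain ⟨hiA, hyi⟩ := mem_filter.1 hi
    by_contra hiZ
    exact ne_of_mem_region hyR (hout i hiA hiZ) hyi
  · ext i
    constructor
    · intro hi
      obtain ⟨hiA, hyi⟩ := mem_filter.1 hi
      by_cases hiZ : i ∈ Z
      · exact absurd (hyZ i hiZ) hyi.ne'
      · have := hyR i (hout i hiA hiZ)
        split_ifs at this with hiP
        exacts [hiP, absurd hyi this.not_gt]
    · intro hiP
      have := hyR i (hP hiP)
      rw [if_pos hiP] at this
      exact mem_filter.2 ⟨(mem_sdiff.1 (hP hiP)).1, this⟩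

theorem connectedComponentIn_eq_cell (A : Finset ι) (x : E) :
    connectedComponentIn {y | ∀ i ∈ A, f i y = c i ↔ f i x = c i} x =
      cell f c A (zeroSet f c A x) (posSet f c A x) := by
  set D := {y | ∀ i ∈ A, f i y = c i ↔ f i x = c i}
  have hxD : x ∈ D := fun i _ => Iff.rfl
  have hcellD : cell f c A (zeroSet f c A x) (posSet f c A x) ⊆ D := by
    intro y ⟨hyZ, hyR⟩ i hiA
    by_cases hiZ : i ∈ zeroSet f c A x
    · exact iff_of_true (hyZ i hiZ) (mem_filter.1 hiZ).2
    · exact iff_of_false (ne_of_mem_region hyR (mem_sdiff.2 ⟨hiA, hiZ⟩))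
        (ne_of_mem_region (mem_cell_self f c A x).2 (mem_sdiff.2 ⟨hiA, hiZ⟩))
  have hconvex : Convex ℝ (cell f c A (zeroSet f c A x) (posSet f c A x)) :=
    (flat f c _).convex.inter (convex_region f c _ _)
  refine subset_antisymm (fun y hy => ?_)
    (hconvex.isPreconnected.subset_connectedComponentIn (mem_cell_self f c A x) hcellD)
  have hyD : y ∈ D := connectedComponentIn_subset D x hy
  refine ⟨fun i hi => (hyD i (mem_filter.1 hi).1).2 (mem_filter.1 hi).2, fun i hi => ?_⟩
  obtain ⟨hiA, hiZ⟩ := mem_sdiff.1 hi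
  have hxi : f i x ≠ c i := fun h => hiZ (mem_filter.2 ⟨hiA, h⟩)
  have hyi : f i y ≠ c i := mt (hyD i hiA).1 hxi
  have hside : c i < f i x ↔ c i < f i y :=
    isPreconnected_connectedComponentIn.lt_iff_lt_of_forall_ne (f i).continuous.continuousOn
      (fun z hz => mt (connectedComponentIn_subset D x hz i hiA).1 hxi)
      (mem_connectedComponentIn hxD) hy
  split_ifs with hiP
  · exact hside.1 (mem_filter.1 hiP).2
  · exact lt_of_le_of_ne (not_lt.1 fun h => hiP (mem_filter.2 ⟨hiA, hside.2 h⟩)) hyi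

theorem injOn_cell (r : ℕ) :
    Set.InjOn (fun p : Σ _ : Finset ι, Finset ι => cell f c A p.1 p.2)
      (cellPatterns f c A r) := by
  rintro ⟨Z, P⟩ hp ⟨Z', P'⟩ hp' (heq : cell f c A Z P = cell f c A Z' P')
  rw [mem_coe, mem_cellPatterns] at hp hp'
  obtain ⟨y, hy⟩ := hp.2.2.2
  obtain ⟨hZ, hP⟩ := zeroSet_eq_and_posSet_eq_of_mem_cell hp.1 hp.2.2.1 hy
  obtain ⟨hZ', hP'⟩ := zeroSet_eq_and_posSet_eq_of_mem_cell hp'.1 hp'.2.2.1 (heq ▸ hy)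
  obtain rfl : Z = Z' := hZ.symm.trans hZ'
  obtain rfl : P = P' := hP.symm.trans hP'
  rfl

theorem InGeneralPosition.card_cellPatterns {d r : ℕ} (h : InGeneralPosition f c ⊤ A d)
    (hr : r ≤ d) :
    #(cellPatterns f c A r) = (#A).choose r * ∑ j ∈ range (d - r + 1), (#A - r).choose j := by
  rw [cellPatterns, card_sigma, ← card_powersetCard r A, ← smul_eq_mul, ← sum_const]
  refine sum_congr rfl fun Z hZ => ?_
  obtain ⟨hZA, hZr⟩ := mem_powersetCard.1 hZ
  have h' := h.restrict hZA (hZr ▸ hr)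
  rw [top_inf_eq, hZr] at h'
  rw [← hZr, ← card_sdiff_of_subset hZA, hZr]
  exact h'.regionCount_eq

end Cells

section Euclidean

variable {l : ℕ} {f : Set (Fin l → ℝ) → (Fin l → ℝ) →L[ℝ] ℝ} {c : Set (Fin l → ℝ) → ℝ}
  {A : Finset (Set (Fin l → ℝ))}

theorem inGeneralPosition_top (hA : ∀ H ∈ A, H = {x | f H x = c H})
    (hgen : ∀ S : Finset (Set (Fin l → ℝ)), ↑S ⊆ (↑A : Set (Set (Fin l → ℝ))) →
      S.Nonempty →
      (S.card ≤ l → (⋂₀ (↑S : Set (Set (Fin l → ℝ)))).Nonempty ∧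
        setDim l (⋂₀ (↑S : Set (Set (Fin l → ℝ)))) = l - S.card) ∧
      (l < S.card → ⋂₀ (↑S : Set (Set (Fin l → ℝ))) = ∅)) :
    InGeneralPosition f c ⊤ A l := by
  intro S hS
  rw [top_inf_eq]
  rcases S.eq_empty_or_nonempty with rfl | hne
  · rw [flat_empty, AffineSubspace.direction_top]; simp
  have hcoe : (flat f c S : Set (Fin l → ℝ)) = ⋂₀ ↑S := by
    ext x
    simp only [SetLike.mem_coe, mem_flat, Set.mem_sInter]
    exact forall₂_congr fun H hH => (Set.ext_iff.1 (hA H (hS hH)) x).symm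
  have hdim : setDim l (⋂₀ ↑S) = Module.finrank ℝ (flat f c S).direction := by
    rw [setDim, ← hcoe, AffineSubspace.affineSpan_coe]
  rw [hcoe, ← hdim]
  exact hgen S (coe_subset.2 hS) hne

theorem arrFace_eq_cell (hA : ∀ H ∈ A, H = {x | f H x = c H}) (x : Fin l → ℝ) :
    arrFace l A x = cell f c A (zeroSet f c A x) (posSet f c A x) := by
  rw [← connectedComponentIn_eq_cell, arrFace]
  congr 1
  ext y
  have hmem : ∀ H ∈ A, ∀ z, z ∈ H ↔ f H z = c H := fun H hH z => Set.ext_iff.1 (hA H hH) z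
  simp only [Set.mem_sdiff, Set.mem_sInter, Set.mem_sUnion, Set.mem_ofPred_eq]
  refine ⟨fun ⟨hin, hout⟩ H hH => ?_,
    fun h => ⟨fun H ⟨hH, hx⟩ => ?_, fun ⟨H, ⟨hH, hx⟩, hy⟩ => ?_⟩⟩
  · rw [← hmem H hH y, ← hmem H hH x]
    exact ⟨fun hy => by_contra fun hx => hout ⟨H, ⟨hH, hx⟩, hy⟩, fun hx => hin H ⟨hH, hx⟩⟩
  · exact (hmem H hH y).2 ((h H hH).2 ((hmem H hH x).1 hx))
  · exact hx ((hmem H hH x).2 ((h H hH).1 ((hmem H hH y).1 hy)))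

theorem setDim_cell {Z P : Finset (Set (Fin l → ℝ))} (hgp : InGeneralPosition f c ⊤ A l)
    (hZ : Z ⊆ A) (hne : (cell f c A Z P).Nonempty) : setDim l (cell f c A Z P) = l - #Z := by
  obtain ⟨y, hyZ, hyR⟩ := hne
  have hZl : #Z ≤ l := hgp.card_le hZ ⟨y, by simpa using hyZ⟩
  have := ((hgp Z hZ).1 hZl).2
  rw [top_inf_eq] at this
  rw [setDim, cell, AffineSubspace.direction_affineSpan_inter_isOpen _ (isOpen_region f c _ _)
    hyZ hyR, this]

theorem setOf_arrFace_eq_image (hA : ∀ H ∈ A, H = {x | f H x = c H})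
    (hgp : InGeneralPosition f c ⊤ A l) {k : ℕ} (hk : k ≤ l) :
    {F | F ∈ Set.range (arrFace l A) ∧ setDim l F = k} =
      ↑((cellPatterns f c A (l - k)).image fun p => cell f c A p.1 p.2) := by
  ext F
  simp only [Set.mem_ofPred_eq, coe_image, Set.mem_image, mem_coe, mem_cellPatterns]
  constructor
  · rintro ⟨⟨x, rfl⟩, hdim⟩
    rw [arrFace_eq_cell hA] at hdim ⊢
    have hZA : zeroSet f c A x ⊆ A := filter_subset _ A
    have hne : (cell f c A (zeroSet f c A x) (posSet f c A x)).Nonempty :=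
      ⟨x, mem_cell_self f c A x⟩
    have hZl := hgp.card_le hZA ⟨x, by simpa using (mem_cell_self f c A x).1⟩
    rw [setDim_cell hgp hZA hne] at hdim
    exact ⟨⟨zeroSet f c A x, posSet f c A x⟩,
      ⟨hZA, by dsimp only; omega, posSet_subset, hne⟩, rfl⟩
  · rintro ⟨⟨Z, P⟩, ⟨hZA, hZk, hPZ, ⟨y, hy⟩⟩, rfl⟩
    obtain ⟨hZy, hPy⟩ := zeroSet_eq_and_posSet_eq_of_mem_cell hZA hPZ hy
    refine ⟨⟨y, by rw [arrFace_eq_cell hA, hZy, hPy]⟩, ?_⟩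
    rw [setDim_cell hgp hZA ⟨y, hy⟩, hZk]
    omega

end Euclidean

end HyperplaneArrangement

open HyperplaneArrangement

open Finset in
/-- For `n` hyperplanes in absolute general position in `ℝˡ` (any `k` of
them, `1 ≤ k ≤ l`, intersect in an `(l-k)`-dimensional flat, and any more than `l` of them
have empty intersection), the number of `k`-dimensional faces of the induced
stratification is `f_k = ∑_{j=0}^{k} C(n, l-j) · C(l-j, l-k)`. -/
theorem face_count_of_hyperplanes_in_general_position
    (l n : ℕ) (A : Finset (Set (Fin l → ℝ))) (hcard : A.card = n)
    (hhyp : ∀ H ∈ A, ∃ f : (Fin l → ℝ) →ₗ[ℝ] ℝ, f ≠ 0 ∧ ∃ c : ℝ, H = {x | f x = c})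
    (hgen : ∀ S : Finset (Set (Fin l → ℝ)), ↑S ⊆ (↑A : Set (Set (Fin l → ℝ))) →
      S.Nonempty →
      (S.card ≤ l → (⋂₀ (↑S : Set (Set (Fin l → ℝ)))).Nonempty ∧
        setDim l (⋂₀ (↑S : Set (Set (Fin l → ℝ)))) = l - S.card) ∧
      (l < S.card → ⋂₀ (↑S : Set (Set (Fin l → ℝ))) = ∅))
    (k : ℕ) (hk : k ≤ l) :
    Nat.card {F : Set (Fin l → ℝ) | F ∈ Set.range (arrFace l A) ∧ setDim l F = k} =
      ∑ j ∈ Finset.range (k + 1), Nat.choose n (l - j) * Nat.choose (l - j) (l - k) := by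
  choose! f _ c hA using hhyp
  have hA' : ∀ H ∈ A, H = {x | LinearMap.toContinuousLinearMap (f H) x = c H} := hA
  have hgp := inGeneralPosition_top hA' hgen
  rw [setOf_arrFace_eq_image hA' hgp hk, Nat.card_coe_set_eq, Set.ncard_coe_finset,
    card_image_of_injOn (injOn_cell _), hgp.card_cellPatterns (Nat.sub_le l k),
    Nat.sub_sub_self hk, hcard, sum_choose_mul_choose_eq n l k hk]
end

section
/- For an arrangement of codimension-1 subtori in the l-torus T^l = ℝˡ/ℤˡ in relative general position, the number of k-dimensional faces is f_k = a₀ · C(l, l−k), where a₀ is the number of 0-dimensional elements of the intersection poset; equivalently the f-polynomial is a₀(x+1)^l. -/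
open scoped Classical

open Finset Polynomial in
/-- For an arrangement of codimension-1 subtori of the `l`-torus in relative
general position, the number of `k`-dimensional faces is `f_k = a₀ · C(l, l-k)`, where
`a₀` is the number of `0`-dimensional elements of the intersection poset; equivalently
the `f`-polynomial is `a₀(x+1)ˡ`.

The combinatorial data of such an arrangement is encoded as follows: `L` is the (finite)
intersection poset, with minimum `Xhat` of dimension `l`; every interval `[Y,Z]` is a
Boolean lattice of rank `dim Y - dim Z` (relative general position); `μ` is the Möbius
function and `κ` the combinatorial Euler characteristic, which vanishes on
positive-dimensional subtori and equals `1` on points; the face numbers are given by the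
(assumed) face-count formula `f_k = ∑_{dim Y = k} (-1)^k ∑_{Y ≤ Z} μ(Y,Z) κ(Z)`. -/
theorem face_count_of_toric_arrangement_in_general_position
    (l : ℕ) (L : Type) [Fintype L] [PartialOrder L]
    (Xhat : L) (hbot : ∀ Y : L, Xhat ≤ Y)
    (dim : L → ℕ) (hdimbot : dim Xhat = l)
    (hboolean : ∀ Y Z : L, Y ≤ Z →
      ∃ e : Set.Icc Y Z ≃o Finset (Fin (dim Y - dim Z)),
        ∀ W : Set.Icc Y Z, (e W).card = dim Y - dim (W : L))
    (μ : L → L → ℤ)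
    (hμ_refl : ∀ Y : L, μ Y Y = 1)
    (hμ_lt : ∀ Y Z : L, Y < Z →
      μ Y Z = -∑ W ∈ univ.filter (fun W => Y ≤ W ∧ W < Z), μ Y W)
    (hμ_zero : ∀ Y Z : L, ¬ Y ≤ Z → μ Y Z = 0)
    (κ : L → ℤ)
    (hκpos : ∀ Z : L, 1 ≤ dim Z → κ Z = 0)
    (hκ0 : ∀ Z : L, dim Z = 0 → κ Z = 1)
    (f : ℕ → ℤ)
    (hf : ∀ k : ℕ, f k = ∑ Y ∈ univ.filter (fun Y => dim Y = k),
      (-1 : ℤ) ^ k * ∑ Z ∈ univ.filter (fun Z => Y ≤ Z), μ Y Z * κ Z)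
    (a₀ : ℕ) (ha₀ : a₀ = (univ.filter (fun Y : L => dim Y = 0)).card) :
    (∀ k : ℕ, k ≤ l → f k = (a₀ : ℤ) * Nat.choose l (l - k)) ∧
      ∑ k ∈ Finset.range (l + 1), C (f k) * X ^ (l - k) =
        (a₀ : ℤ[X]) * (X + 1) ^ l := by
  classical
  -- if the rank of an interval is 0 then its endpoints coincide
  have hrank0 : ∀ Y Z : L, Y ≤ Z → dim Y - dim Z = 0 → Y = Z := by
    intro Y Z hYZ h0
    obtain ⟨e, he⟩ := hboolean Y Z hYZ
    have hemp : ∀ S : Finset (Fin (dim Y - dim Z)), S = ∅ := fun S =>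
      Finset.eq_empty_of_forall_notMem (fun x _ => absurd x.2 (by omega))
    have h1 : e ⟨Y, ⟨le_refl Y, hYZ⟩⟩ = e ⟨Z, ⟨hYZ, le_refl Z⟩⟩ := (hemp _).trans (hemp _).symm
    have := e.injective h1
    exact congrArg Subtype.val this
  -- dim of every element is at most l
  have hdim_le : ∀ Y : L, dim Y ≤ l := by
    intro Y
    by_contra h
    push_neg at h
    have h0 : dim Xhat - dim Y = 0 := by omega
    have heq := hrank0 Xhat Y (hbot Y) h0
    subst heq
    omega
  
  -- Möbius function of a Boolean interval
  have hμAll : ∀ (m : ℕ) (Y Z : L), Y ≤ Z → dim Y - dim Z ≤ m →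
      μ Y Z = (-1 : ℤ) ^ (dim Y - dim Z) := by
    intro m
    induction m with
    | zero =>
      intro Y Z hYZ hgap
      have h0 : dim Y - dim Z = 0 := Nat.le_zero.mp hgap
      have heq := hrank0 Y Z hYZ h0
      subst heq
      rw [hμ_refl, h0, pow_zero]
    | succ m IH =>
      intro Y Z hYZ hgap
      rcases eq_or_lt_of_le hYZ with rfl | hlt
      · rw [hμ_refl, Nat.sub_self, pow_zero]
      · obtain ⟨e, he⟩ := hboolean Y Z hYZ
        have hZcard : (e ⟨Z, ⟨hYZ, le_refl Z⟩⟩).card = dim Y - dim Z := he _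
        have hWgap : ∀ (W : L) (h1 : Y ≤ W) (h2 : W < Z), dim Y - dim W < dim Y - dim Z := by
          intro W h1 h2
          have hc : (e ⟨W, ⟨h1, le_of_lt h2⟩⟩).card = dim Y - dim W := he ⟨W, ⟨h1, le_of_lt h2⟩⟩
          have hlt2 : e ⟨W, ⟨h1, le_of_lt h2⟩⟩ < e ⟨Z, ⟨hYZ, le_refl Z⟩⟩ :=
            e.lt_iff_lt.mpr (Subtype.mk_lt_mk.mpr h2)
          have := Finset.card_lt_card hlt2
          omega
        have hn1 : 1 ≤ dim Y - dim Z := by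
          by_contra hc
          exact absurd (hrank0 Y Z hYZ (by omega)) (ne_of_lt hlt)
        rw [hμ_lt Y Z hlt]
        rw [Finset.sum_congr rfl (fun W hW => by
          simp only [mem_filter, mem_univ, true_and] at hW
          exact IH Y W hW.1 (by have := hWgap W hW.1 hW.2; omega))]
        -- total alternating sum over the Boolean interval vanishes
        have htot : ∑ W ∈ univ.filter (fun W => Y ≤ W ∧ W ≤ Z),
            (-1 : ℤ) ^ (dim Y - dim W) = 0 := by
          rw [Finset.sum_subtype (p := fun W => W ∈ Set.Icc Y Z) _
            (fun x => by simp [Set.mem_Icc]) (fun W => (-1 : ℤ) ^ (dim Y - dim W))]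
          rw [Fintype.sum_equiv e.toEquiv _ (fun S => (-1 : ℤ) ^ S.card)
            (fun W => by
              show (-1 : ℤ) ^ (dim Y - dim (W : L)) = (-1 : ℤ) ^ (e W).card
              rw [he W])]
          rw [← Finset.powerset_univ, Finset.sum_powerset_neg_one_pow_card, if_neg]
          intro hc
          have h2 : (0 : ℕ) < dim Y - dim Z := hn1
          have h3 : (Finset.univ : Finset (Fin (dim Y - dim Z))).card = 0 := by
            rw [hc, Finset.card_empty]
          rw [Finset.card_univ, Fintype.card_fin] at h3
          omega
        have hsplit : (univ.filter (fun W => Y ≤ W ∧ W ≤ Z))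
            = insert Z (univ.filter (fun W => Y ≤ W ∧ W < Z)) := by
          ext W
          simp only [mem_insert, mem_filter, mem_univ, true_and]
          constructor
          · rintro ⟨h1, h2⟩
            rcases h2.lt_or_eq with h | h
            · exact Or.inr ⟨h1, h⟩
            · exact Or.inl h
          · rintro (rfl | ⟨h1, h2⟩)
            · exact ⟨hYZ, le_refl _⟩
            · exact ⟨h1, h2.le⟩
        have hZnot : Z ∉ univ.filter (fun W => Y ≤ W ∧ W < Z) := by
          simp [lt_irrefl]
        rw [hsplit, Finset.sum_insert hZnot] at htot
        linarith
  -- counting elements of dimension k below a point Z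
  have hcount : ∀ Z : L, dim Z = 0 → ∀ k : ℕ, k ≤ l →
      (univ.filter (fun Y : L => dim Y = k ∧ Y ≤ Z)).card = Nat.choose l (l - k) := by
    intro Z hZ k hk
    obtain ⟨e, he⟩ := hboolean Xhat Z (hbot Z)
    have hn : dim Xhat - dim Z = l := by omega
    have hcard : (univ.filter (fun Y : L => dim Y = k ∧ Y ≤ Z)).card
        = (univ.filter (fun S : Finset (Fin (dim Xhat - dim Z)) => S.card = l - k)).card := by
      refine Finset.card_bij'
        (fun Y hY => e ⟨Y, ⟨hbot Y, (Finset.mem_filter.mp hY).2.2⟩⟩)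
        (fun S _ => ((e.symm S : Set.Icc Xhat Z) : L)) ?_ ?_ ?_ ?_
      · intro Y hY
        have hYk := (Finset.mem_filter.mp hY).2.1
        simp only [mem_filter, mem_univ, true_and]
        rw [he]
        simp [hYk, hdimbot]
      · intro S hS
        simp only [mem_filter, mem_univ, true_and] at hS ⊢
        refine ⟨?_, (e.symm S).2.2⟩
        have h1 := he (e.symm S)
        rw [e.apply_symm_apply] at h1
        have h2 := hdim_le ((e.symm S : Set.Icc Xhat Z) : L)
        omega
      · intro Y hY
        show ((e.symm (e ⟨Y, ⟨hbot Y, (Finset.mem_filter.mp hY).2.2⟩⟩) :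
          Set.Icc Xhat Z) : L) = Y
        rw [e.symm_apply_apply]
      · intro S hS
        have h1 : ∀ (h : ((e.symm S : Set.Icc Xhat Z) : L) ∈ Set.Icc Xhat Z),
            e ⟨((e.symm S : Set.Icc Xhat Z) : L), h⟩ = S := by
          intro h
          have h2 : (⟨((e.symm S : Set.Icc Xhat Z) : L), h⟩ : Set.Icc Xhat Z) = e.symm S :=
            Subtype.ext rfl
          rw [h2, e.apply_symm_apply]
        exact h1 _
    rw [hcard]
    have hps : (univ.filter (fun S : Finset (Fin (dim Xhat - dim Z)) => S.card = l - k))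
        = Finset.powersetCard (l - k) univ := by
      rw [Finset.powersetCard_eq_filter, Finset.powerset_univ]
    rw [hps, Finset.card_powersetCard, Finset.card_univ, Fintype.card_fin, hn]
  -- the key face-count formula
  have key : ∀ k : ℕ, k ≤ l → f k = (a₀ : ℤ) * Nat.choose l (l - k) := by
    intro k hk
    rw [hf k]
    have h1 : ∀ Y ∈ univ.filter (fun Y : L => dim Y = k),
        (-1 : ℤ) ^ k * ∑ Z ∈ univ.filter (fun Z => Y ≤ Z), μ Y Z * κ Z
          = ((univ.filter (fun Z : L => Y ≤ Z ∧ dim Z = 0)).card : ℤ) := by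
      intro Y hY
      simp only [mem_filter, mem_univ, true_and] at hY
      have hinner : ∑ Z ∈ univ.filter (fun Z => Y ≤ Z), μ Y Z * κ Z
          = ∑ Z ∈ univ.filter (fun Z => Y ≤ Z), (if dim Z = 0 then (-1 : ℤ) ^ k else 0) := by
        refine Finset.sum_congr rfl fun Z hZ => ?_
        simp only [mem_filter, mem_univ, true_and] at hZ
        by_cases h0 : dim Z = 0
        · rw [if_pos h0, hκ0 Z h0, mul_one, hμAll (dim Y - dim Z) Y Z hZ (le_refl _),
            h0, Nat.sub_zero, hY]
        · rw [if_neg h0, hκpos Z (by omega), mul_zero]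
      have hone : (-1 : ℤ) ^ k * (-1 : ℤ) ^ k = 1 := by
        rw [← pow_add]; exact Even.neg_one_pow (Even.add_self k)
      rw [hinner, ← Finset.sum_filter, Finset.filter_filter, Finset.sum_const, nsmul_eq_mul]
      linear_combination ((univ.filter (fun Z : L => Y ≤ Z ∧ dim Z = 0)).card : ℤ) * hone
    rw [Finset.sum_congr rfl h1]
    -- double counting
    have hswap : ∑ Y ∈ univ.filter (fun Y : L => dim Y = k),
        ((univ.filter (fun Z : L => Y ≤ Z ∧ dim Z = 0)).card : ℤ)
        = ∑ Z ∈ univ.filter (fun Z : L => dim Z = 0),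
            ((univ.filter (fun Y : L => dim Y = k ∧ Y ≤ Z)).card : ℤ) := by
      have e1 : ∑ Y ∈ univ.filter (fun Y : L => dim Y = k),
          ((univ.filter (fun Z : L => Y ≤ Z ∧ dim Z = 0)).card : ℤ)
          = ∑ Y : L, ∑ Z : L, (if dim Y = k ∧ Y ≤ Z ∧ dim Z = 0 then (1 : ℤ) else 0) := by
        rw [Finset.sum_filter]
        refine Finset.sum_congr rfl fun Y _ => ?_
        by_cases hp : dim Y = k
        · rw [if_pos hp, Finset.card_filter]
          push_cast
          refine Finset.sum_congr rfl fun Z _ => ?_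
          simp [hp]
        · rw [Finset.sum_congr rfl (fun Z _ => by rw [if_neg (by tauto)]),
            Finset.sum_const_zero, if_neg hp]
      have e2 : ∑ Z ∈ univ.filter (fun Z : L => dim Z = 0),
          ((univ.filter (fun Y : L => dim Y = k ∧ Y ≤ Z)).card : ℤ)
          = ∑ Z : L, ∑ Y : L, (if dim Y = k ∧ Y ≤ Z ∧ dim Z = 0 then (1 : ℤ) else 0) := by
        rw [Finset.sum_filter]
        refine Finset.sum_congr rfl fun Z _ => ?_
        by_cases hp : dim Z = 0
        · rw [if_pos hp, Finset.card_filter]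
          push_cast
          refine Finset.sum_congr rfl fun Y _ => ?_
          simp [hp]
        · rw [Finset.sum_congr rfl (fun Y _ => by rw [if_neg (by tauto)]),
            Finset.sum_const_zero, if_neg hp]
      rw [e1, e2, Finset.sum_comm]
    rw [hswap]
    rw [Finset.sum_congr rfl (fun Z hZ => by
      rw [hcount Z (by simpa using hZ) k hk])]
    rw [Finset.sum_const, nsmul_eq_mul, ha₀]
  refine ⟨key, ?_⟩
  -- polynomial identity
  have h2 : ∑ k ∈ Finset.range (l + 1), C (f k) * X ^ (l - k)
      = ∑ k ∈ Finset.range (l + 1),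
          ((a₀ : ℤ[X]) * (Nat.choose l (l - k) : ℤ[X])) * X ^ (l - k) := by
    refine Finset.sum_congr rfl fun k hk => ?_
    rw [key k (by have := Finset.mem_range.mp hk; omega)]
    rw [map_mul, Polynomial.C_eq_natCast, Polynomial.C_eq_natCast]
  rw [h2]
  have hrefl := Finset.sum_range_reflect
    (fun j => ((a₀ : ℤ[X]) * (Nat.choose l j : ℤ[X])) * X ^ j) (l + 1)
  simp only [Nat.add_sub_cancel] at hrefl
  rw [hrefl]
  rw [add_pow]
  rw [Finset.mul_sum]
  refine Finset.sum_congr rfl fun k _ => ?_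
  push_cast
  ring
end

section
/- For a simple arrangement of hyperspheres in the sphere S^l, the number of k-dimensional faces is f_k = 2 · Σ_{j=2, j even}^{k} a_j C(l−j, l−k) + a₀ C(l, k), where a_j is the number of j-dimensional intersection subspheres. -/
open scoped Classical

open Finset Polynomial in
/-- For a simple arrangement of hyperspheres in the sphere `Sˡ`, the number
of `k`-dimensional faces is `f_k = 2 ∑_{j=2, j even}^{k} a_j C(l-j, l-k) + a₀ C(l, k)`,
where `a_j` is the number of `j`-dimensional intersection subspheres.

The combinatorial data is encoded as follows: `L` is the (finite) intersection poset with
minimum `Sˡ` of dimension `l`; every interval is Boolean of rank `dim Y - dim Z`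
(simplicity); `μ` is the Möbius function; the combinatorial Euler characteristic `κ` is
`2` on even-dimensional subspheres of positive dimension, `0` on odd-dimensional ones and
`1` on points; the face-count formula `f_k = ∑_{dim Y = k} (-1)^k ∑_{Y ≤ Z} μ(Y,Z) κ(Z)`
is assumed. -/
theorem face_count_of_simple_hypersphere_arrangement
    (l : ℕ) (L : Type) [Fintype L] [PartialOrder L]
    (Xhat : L) (hbot : ∀ Y : L, Xhat ≤ Y)
    (dim : L → ℕ) (hdimbot : dim Xhat = l)
    (hboolean : ∀ Y Z : L, Y ≤ Z →
      ∃ e : Set.Icc Y Z ≃o Finset (Fin (dim Y - dim Z)),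
        ∀ W : Set.Icc Y Z, (e W).card = dim Y - dim (W : L))
    (μ : L → L → ℤ)
    (hμ_refl : ∀ Y : L, μ Y Y = 1)
    (hμ_lt : ∀ Y Z : L, Y < Z →
      μ Y Z = -∑ W ∈ univ.filter (fun W => Y ≤ W ∧ W < Z), μ Y W)
    (hμ_zero : ∀ Y Z : L, ¬ Y ≤ Z → μ Y Z = 0)
    (κ : L → ℤ)
    (hκeven : ∀ Z : L, 1 ≤ dim Z → dim Z % 2 = 0 → κ Z = 2)
    (hκodd : ∀ Z : L, dim Z % 2 = 1 → κ Z = 0)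
    (hκ0 : ∀ Z : L, dim Z = 0 → κ Z = 1)
    (f : ℕ → ℤ)
    (hf : ∀ k : ℕ, f k = ∑ Y ∈ univ.filter (fun Y => dim Y = k),
      (-1 : ℤ) ^ k * ∑ Z ∈ univ.filter (fun Z => Y ≤ Z), μ Y Z * κ Z)
    (a : ℕ → ℕ) (ha : ∀ j, a j = (univ.filter (fun Y : L => dim Y = j)).card) :
    ∀ k : ℕ, k ≤ l →
      f k = 2 * ∑ j ∈ Finset.range (k + 1),
          (if 2 ≤ j ∧ j % 2 = 0 then (a j : ℤ) * Nat.choose (l - j) (l - k) else 0) +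
        (a 0 : ℤ) * Nat.choose l k := by
  classical
  -- If `Y ≤ Z` and `dim Y ≤ dim Z` then `Y = Z`.
  have hA : ∀ Y Z : L, Y ≤ Z → dim Y ≤ dim Z → Y = Z := by
    intro Y Z hYZ hd
    obtain ⟨e, he⟩ := hboolean Y Z hYZ
    have hYm : Y ∈ Set.Icc Y Z := ⟨le_rfl, hYZ⟩
    have hZm : Z ∈ Set.Icc Y Z := ⟨hYZ, le_rfl⟩
    have c1 : (e ⟨Y, hYm⟩) = ∅ := Finset.card_eq_zero.mp (by
      rw [he]; show dim Y - dim Y = 0; omega)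
    have c2 : (e ⟨Z, hZm⟩) = ∅ := Finset.card_eq_zero.mp (by
      rw [he]; show dim Y - dim Z = 0; omega)
    have := e.injective (c1.trans c2.symm)
    exact congrArg Subtype.val this
  have hdim_le : ∀ Y Z : L, Y ≤ Z → dim Z ≤ dim Y := by
    intro Y Z h
    by_contra hc
    push_neg at hc
    have heq := hA Y Z h hc.le
    rw [heq] at hc
    exact lt_irrefl _ hc
  have hdim_lt : ∀ Y Z : L, Y < Z → dim Z < dim Y := by
    intro Y Z h
    by_contra hc
    push_neg at hc
    exact h.ne (hA Y Z h.le hc)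
  have hdl : ∀ Z : L, dim Z ≤ l := by
    intro Z
    have h1 := hdim_le Xhat Z (hbot Z)
    omega
  -- Möbius values on Boolean intervals
  have hμval : ∀ n : ℕ, ∀ Y Z : L, Y ≤ Z → dim Y - dim Z = n → μ Y Z = (-1 : ℤ) ^ n := by
    intro n
    induction n using Nat.strong_induction_on with
    | _ n ih =>
      intro Y Z hYZ hn
      rcases eq_or_lt_of_le hYZ with rfl | hlt
      · have : n = 0 := by omega
        rw [hμ_refl, this, pow_zero]
      · subst hn
        obtain ⟨e, he⟩ := hboolean Y Z hYZ
        have hdZ : dim Z < dim Y := hdim_lt Y Z hlt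
        have hZm : Z ∈ Set.Icc Y Z := ⟨hYZ, le_rfl⟩
        have htop : e ⟨Z, hZm⟩ = Finset.univ := by
          rw [← Finset.card_eq_iff_eq_univ, Fintype.card_fin, he]
        rw [hμ_lt Y Z hlt]
        have hsum : ∑ W ∈ univ.filter (fun W => Y ≤ W ∧ W < Z), μ Y W
            = ∑ S ∈ univ.filter
                (fun S : Finset (Fin (dim Y - dim Z)) => S ≠ Finset.univ),
                (-1 : ℤ) ^ S.card := by
          apply Finset.sum_bij
            (fun W hW => e ⟨W, ⟨(Finset.mem_filter.mp hW).2.1,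
              (Finset.mem_filter.mp hW).2.2.le⟩⟩)
          · intro W hW
            simp only [Finset.mem_filter, Finset.mem_univ, true_and] at hW ⊢
            intro hEq
            have : (⟨W, ⟨hW.1, hW.2.le⟩⟩ : Set.Icc Y Z) = ⟨Z, hZm⟩ :=
              e.injective (hEq.trans htop.symm)
            exact hW.2.ne (congrArg Subtype.val this)
          · intro W1 h1 W2 h2 hEq
            have := e.injective hEq
            exact congrArg Subtype.val this
          · intro S hS
            simp only [Finset.mem_filter, Finset.mem_univ, true_and] at hS
            have hWZ : ((e.symm S) : L) ≠ Z := by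
              intro h
              apply hS
              rw [← e.apply_symm_apply S]
              have : e.symm S = (⟨Z, hZm⟩ : Set.Icc Y Z) := Subtype.ext h
              rw [this, htop]
            refine ⟨((e.symm S) : L), ?_, ?_⟩
            · simp only [Finset.mem_filter, Finset.mem_univ, true_and]
              exact ⟨(e.symm S).2.1, lt_of_le_of_ne (e.symm S).2.2 hWZ⟩
            · exact e.apply_symm_apply S
          · intro W hW
            have hmem := Finset.mem_filter.mp hW
            have hYW : Y ≤ W := hmem.2.1
            have hWdim : dim Z < dim W := hdim_lt W Z hmem.2.2
            have hWY : dim W ≤ dim Y := hdim_le Y W hYW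
            rw [ih (dim Y - dim W) (by omega) Y W hYW rfl, he]
        rw [hsum]
        -- alternating sum over proper subsets
        have hfull : ∑ S ∈ (univ : Finset (Finset (Fin (dim Y - dim Z)))),
            (-1 : ℤ) ^ S.card = 0 := by
          rw [← Finset.powerset_univ]
          have hne : Nonempty (Fin (dim Y - dim Z)) := ⟨⟨0, by omega⟩⟩
          exact Finset.sum_powerset_neg_one_pow_card_of_nonempty Finset.univ_nonempty
        have hsplit : ∑ S ∈ (univ : Finset (Finset (Fin (dim Y - dim Z)))),
            (-1 : ℤ) ^ S.card
            = (-1 : ℤ) ^ (Finset.univ : Finset (Fin (dim Y - dim Z))).card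
              + ∑ S ∈ univ.filter
                  (fun S : Finset (Fin (dim Y - dim Z)) => S ≠ Finset.univ),
                  (-1 : ℤ) ^ S.card := by
          rw [Finset.filter_ne' univ Finset.univ]
          exact (Finset.add_sum_erase _ _ (Finset.mem_univ _)).symm
        rw [hfull] at hsplit
        have : ∑ S ∈ univ.filter
            (fun S : Finset (Fin (dim Y - dim Z)) => S ≠ Finset.univ),
            (-1 : ℤ) ^ S.card = -(-1 : ℤ) ^ (dim Y - dim Z) := by
          rw [Finset.card_univ, Fintype.card_fin] at hsplit
          linarith
        rw [this, neg_neg]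
  have hμ' : ∀ Y Z : L, Y ≤ Z → μ Y Z = (-1 : ℤ) ^ (dim Y - dim Z) :=
    fun Y Z h => hμval _ Y Z h rfl
  intro k hk
  -- counting elements below Z of dimension k
  have hcount : ∀ Z : L,
      (univ.filter (fun Y : L => dim Y = k ∧ Y ≤ Z)).card
        = Nat.choose (l - dim Z) (l - k) := by
    intro Z
    obtain ⟨e, he⟩ := hboolean Xhat Z (hbot Z)
    have hcard1 : (univ.filter (fun Y : L => dim Y = k ∧ Y ≤ Z)).card
        = (univ.filter (fun S : Finset (Fin (dim Xhat - dim Z)) =>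
            S.card = l - k)).card := by
      apply Finset.card_bij
        (fun Y hY => e ⟨Y, ⟨hbot Y, (Finset.mem_filter.mp hY).2.2⟩⟩)
      · intro Y hY
        simp only [Finset.mem_filter, Finset.mem_univ, true_and] at hY ⊢
        rw [he]
        show dim Xhat - dim Y = l - k
        rw [hdimbot, hY.1]
      · intro Y1 h1 Y2 h2 hEq
        exact congrArg Subtype.val (e.injective hEq)
      · intro S hS
        simp only [Finset.mem_filter, Finset.mem_univ, true_and] at hS
        refine ⟨(e.symm S).1, ?_, ?_⟩
        · simp only [Finset.mem_filter, Finset.mem_univ, true_and]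
          constructor
          · have h1 : (e (e.symm S)).card = dim Xhat - dim ((e.symm S) : L) :=
              he (e.symm S)
            rw [e.apply_symm_apply] at h1
            have h2 : dim ((e.symm S) : L) ≤ l := hdl _
            omega
          · exact (e.symm S).2.2
        · exact e.apply_symm_apply S
    rw [hcard1, ← Finset.powerset_univ, ← Finset.powersetCard_eq_filter,
      Finset.card_powersetCard, Finset.card_univ, Fintype.card_fin, hdimbot]
  -- sign lemma
  have hsign : ∀ b : ℕ, b ≤ k → (-1 : ℤ) ^ k * (-1 : ℤ) ^ (k - b) = (-1 : ℤ) ^ b := by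
    intro b hb
    have h1 : (-1 : ℤ) ^ k = (-1 : ℤ) ^ b * (-1 : ℤ) ^ (k - b) := by
      rw [← pow_add]; congr 1; omega
    rw [h1, mul_assoc, ← pow_add, ← two_mul, pow_mul, neg_one_sq, one_pow, mul_one]
  -- κ values
  have hκval : ∀ Z : L, κ Z =
      (if dim Z = 0 then 1 else if dim Z % 2 = 0 then 2 else 0) := by
    intro Z
    by_cases h0 : dim Z = 0
    · rw [hκ0 Z h0, if_pos h0]
    · rw [if_neg h0]
      by_cases h2 : dim Z % 2 = 0
      · rw [hκeven Z (by omega) h2, if_pos h2]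
      · rw [hκodd Z (by omega), if_neg h2]
  rw [hf k]
  -- step 1: double sum over univ
  have step1 : ∑ Y ∈ univ.filter (fun Y => dim Y = k),
      (-1 : ℤ) ^ k * ∑ Z ∈ univ.filter (fun Z => Y ≤ Z), μ Y Z * κ Z
      = ∑ Z : L, ∑ Y : L,
        (if dim Y = k ∧ Y ≤ Z then (-1 : ℤ) ^ (dim Z) * κ Z else 0) := by
    rw [Finset.sum_comm]
    rw [Finset.sum_filter]
    apply Finset.sum_congr rfl
    intro Y _
    by_cases hY : dim Y = k
    · rw [if_pos hY, Finset.mul_sum, Finset.sum_filter]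
      apply Finset.sum_congr rfl
      intro Z _
      by_cases hZ : Y ≤ Z
      · rw [if_pos hZ, if_pos ⟨hY, hZ⟩, hμ' Y Z hZ, hY]
        have hbZ : dim Z ≤ k := hY ▸ hdim_le Y Z hZ
        rw [← mul_assoc, hsign (dim Z) hbZ]
      · rw [if_neg hZ, if_neg (by tauto)]
    · rw [if_neg hY]
      symm
      apply Finset.sum_eq_zero
      intro Z _
      rw [if_neg (by tauto)]
  rw [step1]
  -- step 2: inner sum is a count
  have step2 : ∀ Z : L, (∑ Y : L,
      (if dim Y = k ∧ Y ≤ Z then (-1 : ℤ) ^ (dim Z) * κ Z else 0))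
      = (-1 : ℤ) ^ (dim Z) * κ Z * (Nat.choose (l - dim Z) (l - k) : ℤ) := by
    intro Z
    rw [← Finset.sum_filter, Finset.sum_const, nsmul_eq_mul, hcount Z]
    ring
  rw [Finset.sum_congr rfl (fun Z _ => step2 Z)]
  -- step 3: fiberwise by dimension
  have step3 : ∑ Z : L, (-1 : ℤ) ^ (dim Z) * κ Z * (Nat.choose (l - dim Z) (l - k) : ℤ)
      = ∑ j ∈ Finset.range (l + 1), (a j : ℤ) *
          ((-1 : ℤ) ^ j * (if j = 0 then 1 else if j % 2 = 0 then 2 else 0)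
            * (Nat.choose (l - j) (l - k) : ℤ)) := by
    rw [← Finset.sum_fiberwise_of_maps_to (g := dim)
      (fun Z _ => Finset.mem_range.mpr (Nat.lt_succ_of_le (hdl Z)))]
    apply Finset.sum_congr rfl
    intro j _
    rw [Finset.sum_congr rfl (fun Z hZ => by
      have hdZ : dim Z = j := (Finset.mem_filter.mp hZ).2
      rw [hκval Z, hdZ]), Finset.sum_const, nsmul_eq_mul, ← ha j]
  rw [step3]
  -- step 4: termwise identification
  have step4 : ∀ j : ℕ, (a j : ℤ) *
      ((-1 : ℤ) ^ j * (if j = 0 then 1 else if j % 2 = 0 then 2 else 0)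
        * (Nat.choose (l - j) (l - k) : ℤ))
      = (if 2 ≤ j ∧ j % 2 = 0 then 2 * ((a j : ℤ) * Nat.choose (l - j) (l - k)) else 0)
        + (if j = 0 then (a 0 : ℤ) * Nat.choose l k else 0) := by
    intro j
    by_cases h0 : j = 0
    · subst h0
      rw [if_pos rfl, if_pos rfl, if_neg (by omega)]
      simp only [pow_zero, Nat.sub_zero, one_mul, mul_one, zero_add]
      rw [Nat.choose_symm hk]
    · rw [if_neg h0, if_neg h0]
      by_cases h2 : j % 2 = 0
      · rw [if_pos h2, if_pos ⟨by omega, h2⟩]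
        have : (-1 : ℤ) ^ j = 1 := Even.neg_one_pow (Nat.even_iff.mpr h2)
        rw [this]
        ring
      · rw [if_neg h2, if_neg (by tauto)]
        ring
  rw [Finset.sum_congr rfl (fun j _ => step4 j), Finset.sum_add_distrib]
  have hzero : ∑ j ∈ Finset.range (l + 1),
      (if j = 0 then (a 0 : ℤ) * Nat.choose l k else 0)
      = (a 0 : ℤ) * Nat.choose l k := by
    rw [Finset.sum_ite_eq' (Finset.range (l + 1)) 0
      (fun _ => (a 0 : ℤ) * Nat.choose l k)]
    rw [if_pos (Finset.mem_range.mpr (by omega))]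
  rw [hzero]
  congr 1
  -- extend range and pull out the 2
  rw [Finset.mul_sum]
  rw [← Finset.sum_subset (Finset.range_subset_range.mpr (by omega : k + 1 ≤ l + 1))]
  · apply Finset.sum_congr rfl
    intro j _
    by_cases h : 2 ≤ j ∧ j % 2 = 0
    · rw [if_pos h, if_pos h]
    · rw [if_neg h, if_neg h, mul_zero]
  · intro j hj hjk
    have hj1 : j ≤ l := by have := Finset.mem_range.mp hj; omega
    have hjk1 : k < j := by
      by_contra hc
      exact hjk (Finset.mem_range.mpr (by omega))
    by_cases h : 2 ≤ j ∧ j % 2 = 0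
    · rw [if_pos h, Nat.choose_eq_zero_of_lt (by omega)]
      push_cast
      ring
    · rw [if_neg h]
end

section
/- For a simple arrangement of n projective hyperplanes in real projective space ℝP^l in absolute general position, the number of k-dimensional faces is f_k = Σ_{j=0, j even}^{k} C(n, l−j) · C(l−j, l−k) (Buck's formula). -/
open scoped Classical

open Finset Polynomial in
/-- For a simple arrangement of `n` projective hyperplanes in `ℝPˡ` in
absolute general position, the number of `k`-dimensional faces is
`f_k = ∑_{j=0, j even}^{k} C(n, l-j) · C(l-j, l-k)` (Buck's formula).

The combinatorial data is encoded as follows: `L` is the intersection lattice with minimum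
`ℝPˡ` of dimension `l`; every interval is Boolean of rank `dim Y - dim Z` (general
position), and the number of `j`-dimensional elements is `a_j = C(n, l-j)`; `μ` is the
Möbius function; the Euler characteristic `κ(ℝP^d)` is `1` for `d` even and `0` for `d`
odd; the face-count formula `f_k = ∑_{dim Y = k} (-1)^k ∑_{Y ≤ Z} μ(Y,Z) κ(Z)` is
assumed. -/
theorem buck_formula_projective_hyperplanes
    (l n : ℕ) (L : Type) [Fintype L] [PartialOrder L]
    (Xhat : L) (hbot : ∀ Y : L, Xhat ≤ Y)
    (dim : L → ℕ) (hdimbot : dim Xhat = l)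
    (hboolean : ∀ Y Z : L, Y ≤ Z →
      ∃ e : Set.Icc Y Z ≃o Finset (Fin (dim Y - dim Z)),
        ∀ W : Set.Icc Y Z, (e W).card = dim Y - dim (W : L))
    (μ : L → L → ℤ)
    (hμ_refl : ∀ Y : L, μ Y Y = 1)
    (hμ_lt : ∀ Y Z : L, Y < Z →
      μ Y Z = -∑ W ∈ univ.filter (fun W => Y ≤ W ∧ W < Z), μ Y W)
    (hμ_zero : ∀ Y Z : L, ¬ Y ≤ Z → μ Y Z = 0)
    (κ : L → ℤ)
    (hκeven : ∀ Z : L, dim Z % 2 = 0 → κ Z = 1)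
    (hκodd : ∀ Z : L, dim Z % 2 = 1 → κ Z = 0)
    (f : ℕ → ℤ)
    (hf : ∀ k : ℕ, f k = ∑ Y ∈ univ.filter (fun Y => dim Y = k),
      (-1 : ℤ) ^ k * ∑ Z ∈ univ.filter (fun Z => Y ≤ Z), μ Y Z * κ Z)
    (ha : ∀ j : ℕ, j ≤ l →
      (univ.filter (fun Y : L => dim Y = j)).card = Nat.choose n (l - j)) :
    ∀ k : ℕ, k ≤ l →
      f k = ∑ j ∈ Finset.range (k + 1),
        (if j % 2 = 0 then (Nat.choose n (l - j) : ℤ) * Nat.choose (l - j) (l - k)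
          else 0) := by
  classical
  -- strict monotonicity of dimension
  have hmono : ∀ Y Z : L, Y < Z → dim Z < dim Y := by
    intro Y Z hlt
    by_contra hcon
    push_neg at hcon
    obtain ⟨e, he⟩ := hboolean Y Z hlt.le
    have h0 : dim Y - dim Z = 0 := Nat.sub_eq_zero_of_le hcon
    have heq : (⟨Y, Set.mem_Icc.mpr ⟨le_rfl, hlt.le⟩⟩ : Set.Icc Y Z)
        = ⟨Z, Set.mem_Icc.mpr ⟨hlt.le, le_rfl⟩⟩ := by
      apply e.injective
      ext x
      exact absurd x.isLt (by omega)
    exact hlt.ne (congrArg Subtype.val heq)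
  have hmono' : ∀ Y Z : L, Y ≤ Z → dim Z ≤ dim Y := by
    intro Y Z hle
    rcases hle.lt_or_eq with h | h
    · exact (hmono Y Z h).le
    · rw [h]
  have hdimle : ∀ Z : L, dim Z ≤ l := fun Z => hdimbot ▸ hmono' Xhat Z (hbot Z)
  -- the Möbius function of a Boolean interval
  have hmu : ∀ (r : ℕ) (Y Z : L), Y ≤ Z → dim Y - dim Z = r → μ Y Z = (-1 : ℤ) ^ r := by
    intro r
    induction r using Nat.strong_induction_on with
    | _ r ih =>
      intro Y Z hle hr
      rcases hle.lt_or_eq with hlt | heq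
      · obtain ⟨e, he⟩ := hboolean Y Z hle
        have hdZ : dim Z < dim Y := hmono Y Z hlt
        have hr1 : 1 ≤ r := by omega
        have hetop : e ⟨Z, Set.mem_Icc.mpr ⟨hle, le_rfl⟩⟩ = Finset.univ := by
          apply Finset.eq_univ_of_card
          rw [he]
          simp
        have hsum : ∑ W ∈ univ.filter (fun W => Y ≤ W ∧ W < Z), μ Y W
            = ∑ S ∈ (univ : Finset (Finset (Fin (dim Y - dim Z)))).filter
                (fun S => S ≠ Finset.univ), (-1 : ℤ) ^ S.card := by
          apply Finset.sum_bij (fun W hW => e ⟨W, Set.mem_Icc.mpr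
            ⟨(Finset.mem_filter.mp hW).2.1, (Finset.mem_filter.mp hW).2.2.le⟩⟩)
          · intro W hW
            obtain ⟨-, hYW, hWZ⟩ := Finset.mem_filter.mp hW
            refine Finset.mem_filter.mpr ⟨Finset.mem_univ _, ?_⟩
            intro hu
            have hc : (e ⟨W, Set.mem_Icc.mpr ⟨hYW, hWZ.le⟩⟩).card = dim Y - dim W :=
              he ⟨W, Set.mem_Icc.mpr ⟨hYW, hWZ.le⟩⟩
            rw [hu, Finset.card_univ, Fintype.card_fin] at hc
            have h1 := hmono W Z hWZ
            have h2 := hmono' Y W hYW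
            omega
          · intro W₁ h₁ W₂ h₂ hee
            exact congrArg Subtype.val (e.injective hee)
          · intro S hS
            obtain ⟨-, hSne⟩ := Finset.mem_filter.mp hS
            set W : Set.Icc Y Z := e.symm S with hW
            have hWZ : (W : L) < Z := by
              rcases lt_or_eq_of_le W.2.2 with h | h
              · exact h
              · exfalso
                apply hSne
                have : W = ⟨Z, Set.mem_Icc.mpr ⟨hle, le_rfl⟩⟩ := Subtype.ext h
                rw [← hetop, ← this, hW, e.apply_symm_apply]
            refine ⟨(W : L), Finset.mem_filter.mpr ⟨Finset.mem_univ _, W.2.1, hWZ⟩, ?_⟩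
            have : (⟨(W : L), Set.mem_Icc.mpr ⟨W.2.1, hWZ.le⟩⟩ : Set.Icc Y Z) = W := rfl
            rw [this, hW, e.apply_symm_apply]
          · intro W hW
            obtain ⟨-, hYW, hWZ⟩ := Finset.mem_filter.mp hW
            have hc : (e ⟨W, Set.mem_Icc.mpr ⟨hYW, hWZ.le⟩⟩).card = dim Y - dim W :=
              he ⟨W, Set.mem_Icc.mpr ⟨hYW, hWZ.le⟩⟩
            rw [hc]
            have h1 := hmono W Z hWZ
            have h2 := hmono' Y W hYW
            exact ih (dim Y - dim W) (by omega) Y W hYW rfl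
        have htotal : ∑ S ∈ (univ : Finset (Finset (Fin (dim Y - dim Z)))),
            (-1 : ℤ) ^ S.card = 0 := by
          rw [← Finset.powerset_univ, Finset.sum_powerset_neg_one_pow_card]
          have hne : (Finset.univ : Finset (Fin (dim Y - dim Z))) ≠ ∅ := by
            have : ((⟨0, by omega⟩ : Fin (dim Y - dim Z)) : Fin (dim Y - dim Z))
                ∈ (Finset.univ : Finset (Fin (dim Y - dim Z))) := Finset.mem_univ _
            exact Finset.ne_empty_of_mem this
          rw [if_neg hne]
        have hsplit : ∑ S ∈ (univ : Finset (Finset (Fin (dim Y - dim Z)))).filter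
              (fun S => S ≠ Finset.univ), (-1 : ℤ) ^ S.card
            = (∑ S ∈ (univ : Finset (Finset (Fin (dim Y - dim Z)))), (-1 : ℤ) ^ S.card)
              - (-1 : ℤ) ^ (dim Y - dim Z) := by
          rw [← Finset.sum_filter_add_sum_filter_not
            (univ : Finset (Finset (Fin (dim Y - dim Z)))) (fun S => S ≠ Finset.univ)]
          have hsingle : (univ : Finset (Finset (Fin (dim Y - dim Z)))).filter
              (fun S => ¬ S ≠ Finset.univ) = {Finset.univ} := by
            ext S; simp
          rw [hsingle, Finset.sum_singleton, Finset.card_univ, Fintype.card_fin]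
          ring
        rw [hμ_lt Y Z hlt, hsum, hsplit, htotal, hr]
        ring
      · subst heq
        have : r = 0 := by omega
        subst this
        simpa using hμ_refl Y
  intro k hk
  -- count of elements of dimension k below a given Z
  have hcount : ∀ Z : L, (univ.filter (fun Y : L => Y ≤ Z ∧ dim Y = k)).card
      = Nat.choose (l - dim Z) (l - k) := by
    intro Z
    obtain ⟨e, he⟩ := hboolean Xhat Z (hbot Z)
    have h1 : (univ.filter (fun Y : L => Y ≤ Z ∧ dim Y = k)).card
        = ((univ : Finset (Finset (Fin (dim Xhat - dim Z)))).filter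
            (fun S => S.card = l - k)).card := by
      apply Finset.card_bij (fun Y hY => e ⟨Y, Set.mem_Icc.mpr
        ⟨hbot Y, (Finset.mem_filter.mp hY).2.1⟩⟩)
      · intro Y hY
        obtain ⟨-, hYZ, hdY⟩ := Finset.mem_filter.mp hY
        refine Finset.mem_filter.mpr ⟨Finset.mem_univ _, ?_⟩
        rw [he ⟨Y, Set.mem_Icc.mpr ⟨hbot Y, hYZ⟩⟩, hdY, hdimbot]
      · intro Y₁ h₁ Y₂ h₂ hee
        exact congrArg Subtype.val (e.injective hee)
      · intro S hS
        obtain ⟨-, hScard⟩ := Finset.mem_filter.mp hS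
        have hc : (e (e.symm S)).card = dim Xhat - dim ((e.symm S : Set.Icc Xhat Z) : L) :=
          he (e.symm S)
        rw [e.apply_symm_apply, hScard] at hc
        have hdY : dim ((e.symm S : Set.Icc Xhat Z) : L) = k := by
          have h2 := hdimle ((e.symm S : Set.Icc Xhat Z) : L)
          have h3 := hdimbot
          omega
        refine ⟨((e.symm S : Set.Icc Xhat Z) : L), Finset.mem_filter.mpr
          ⟨Finset.mem_univ _, (e.symm S).2.2, hdY⟩, ?_⟩
        have heta : (⟨((e.symm S : Set.Icc Xhat Z) : L), Set.mem_Icc.mpr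
            ⟨hbot _, (e.symm S).2.2⟩⟩ : Set.Icc Xhat Z) = e.symm S := rfl
        rw [heta, e.apply_symm_apply]
    have hsubcard : ((univ : Finset (Finset (Fin (dim Xhat - dim Z)))).filter
        (fun S => S.card = l - k)).card = (dim Xhat - dim Z).choose (l - k) := by
      rw [← Finset.powerset_univ, ← Finset.powersetCard_eq_filter,
        Finset.card_powersetCard, Finset.card_univ, Fintype.card_fin]
    rw [h1, hsubcard, hdimbot]
  -- κ as a function of dimension
  have hκ' : ∀ Z : L, κ Z = if dim Z % 2 = 0 then 1 else 0 := by
    intro Z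
    rcases Nat.mod_two_eq_zero_or_one (dim Z) with h | h
    · rw [hκeven Z h, if_pos h]
    · rw [hκodd Z h, if_neg (by omega)]
  set G : ℕ → ℤ := fun d => ((Nat.choose (l - d) (l - k) : ℤ))
    * ((-1 : ℤ) ^ k * ((-1 : ℤ) ^ (k - d) * (if d % 2 = 0 then (1 : ℤ) else 0))) with hG
  have step1 : f k = ∑ Z ∈ (univ : Finset L), G (dim Z) := by
    rw [hf k]
    have hdist : ∀ Y ∈ univ.filter (fun Y : L => dim Y = k),
        ((-1 : ℤ) ^ k * ∑ Z ∈ univ.filter (fun Z => Y ≤ Z), μ Y Z * κ Z)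
          = ∑ Z ∈ univ.filter (fun Z => Y ≤ Z), (-1 : ℤ) ^ k * (μ Y Z * κ Z) :=
      fun Y _ => Finset.mul_sum _ _ _
    rw [Finset.sum_congr rfl hdist]
    rw [Finset.sum_comm' (s' := fun Z => univ.filter (fun Y => Y ≤ Z ∧ dim Y = k))
      (t' := (univ : Finset L)) (by intro Y Z; simp; tauto)]
    apply Finset.sum_congr rfl
    intro Z _
    have hin : ∀ Y ∈ univ.filter (fun Y : L => Y ≤ Z ∧ dim Y = k),
        (-1 : ℤ) ^ k * (μ Y Z * κ Z)
          = (-1 : ℤ) ^ k * ((-1 : ℤ) ^ (k - dim Z)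
              * (if dim Z % 2 = 0 then (1 : ℤ) else 0)) := by
      intro Y hY
      obtain ⟨-, hYZ, hdY⟩ := Finset.mem_filter.mp hY
      rw [hmu (k - dim Z) Y Z hYZ (by rw [hdY]), hκ' Z]
    rw [Finset.sum_congr rfl hin, Finset.sum_const, hcount Z, nsmul_eq_mul, hG]
  have step2 : ∑ Z ∈ (univ : Finset L), G (dim Z)
      = ∑ d ∈ Finset.range (l + 1), (Nat.choose n (l - d) : ℤ) * G d := by
    rw [← Finset.sum_fiberwise_of_maps_to (g := dim) (t := Finset.range (l + 1))
      (fun Z _ => Finset.mem_range.mpr (by have := hdimle Z; omega)) (fun Z => G (dim Z))]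
    apply Finset.sum_congr rfl
    intro d hd
    have : ∀ Z ∈ (univ : Finset L).filter (fun Z => dim Z = d), G (dim Z) = G d := by
      intro Z hZ
      rw [(Finset.mem_filter.mp hZ).2]
    rw [Finset.sum_congr rfl this, Finset.sum_const,
      ha d (by simpa using Nat.lt_succ_iff.mp (Finset.mem_range.mp hd)), nsmul_eq_mul]
  have step3 : ∀ d ∈ Finset.range (l + 1), (Nat.choose n (l - d) : ℤ) * G d
      = (if d % 2 = 0 then (Nat.choose n (l - d) : ℤ) * Nat.choose (l - d) (l - k)
          else 0) := by
    intro d hd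
    have hdl : d ≤ l := Nat.lt_succ_iff.mp (Finset.mem_range.mp hd)
    rcases Nat.mod_two_eq_zero_or_one d with h | h
    · rw [if_pos h]
      by_cases hdk : d ≤ k
      · have hsign : (-1 : ℤ) ^ k * ((-1 : ℤ) ^ (k - d) * (1 : ℤ)) = 1 := by
          rw [mul_one, ← pow_add]
          exact Even.neg_one_pow ⟨k - d / 2, by omega⟩
        simp only [hG, if_pos h, hsign]
        ring
      · have h0 : Nat.choose (l - d) (l - k) = 0 :=
          Nat.choose_eq_zero_of_lt (by omega)
        simp [hG, h0]
    · rw [if_neg (by omega)]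
      simp [hG, h]
  rw [step1, step2, Finset.sum_congr rfl step3]
  refine (Finset.sum_subset (Finset.range_subset_range.mpr (by omega)) ?_).symm
  intro d hd hnd
  simp only [Finset.mem_range] at hd hnd
  rcases Nat.mod_two_eq_zero_or_one d with h | h
  · rw [if_pos h]
    have h0 : Nat.choose (l - d) (l - k) = 0 := Nat.choose_eq_zero_of_lt (by omega)
    simp [h0]
  · rw [if_neg (by omega)]
end

section
/- Let T² = ℝ²/ℤ² and let 𝒜 be the toric arrangement given by the images of the lines x = −2y, y = −2x, and y = x. Then these three toric lines pairwise and triply intersect exactly in the three points (0,0), (1/3,1/3), (2/3,2/3) (mod ℤ²), and the number of connected components of T² minus the union of the three toric lines is 6. -/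
open Set

noncomputable def pr : ℝ × ℝ → AddCircle (1 : ℝ) × AddCircle (1 : ℝ) :=
  fun p => ((p.1 : AddCircle (1 : ℝ)), (p.2 : AddCircle (1 : ℝ)))

lemma circ_eq (x y : ℝ) : (x : AddCircle (1:ℝ)) = (y : AddCircle (1:ℝ)) ↔ ∃ n : ℤ, x = y + n := by
  rw [← sub_eq_zero, ← AddCircle.coe_sub, AddCircle.coe_eq_zero_iff]
  constructor
  · rintro ⟨n, hn⟩; exact ⟨n, by rw [zsmul_one] at hn; linarith⟩
  · rintro ⟨n, hn⟩; exact ⟨n, by rw [zsmul_one]; linarith⟩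

lemma pr_eq (p q : ℝ × ℝ) : pr p = pr q ↔ (∃ a : ℤ, p.1 = q.1 + a) ∧ (∃ b : ℤ, p.2 = q.2 + b) := by
  simp [pr, Prod.ext_iff, circ_eq]

lemma mem_N1 (x y : ℝ) : pr (x, y) ∈ pr '' {p : ℝ × ℝ | p.1 = -2 * p.2} ↔ ∃ m : ℤ, x + 2*y = m := by
  constructor
  · rintro ⟨⟨u, v⟩, hu, hpr⟩
    simp only [mem_setOf_eq] at hu
    obtain ⟨⟨a, ha⟩, ⟨b, hb⟩⟩ := (pr_eq _ _).mp hpr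
    exact ⟨-(a + 2*b), by push_cast; simp at ha hb; linarith⟩
  · rintro ⟨m, hm⟩
    exact ⟨(x - m, y), by simp only [mem_setOf_eq]; linarith,
      (pr_eq _ _).mpr ⟨⟨-m, by push_cast; ring⟩, ⟨0, by simp⟩⟩⟩

lemma mem_N2 (x y : ℝ) : pr (x, y) ∈ pr '' {p : ℝ × ℝ | p.2 = -2 * p.1} ↔ ∃ m : ℤ, 2*x + y = m := by
  constructor
  · rintro ⟨⟨u, v⟩, hu, hpr⟩
    simp only [mem_setOf_eq] at hu
    obtain ⟨⟨a, ha⟩, ⟨b, hb⟩⟩ := (pr_eq _ _).mp hpr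
    exact ⟨-(2*a + b), by push_cast; simp at ha hb; linarith⟩
  · rintro ⟨m, hm⟩
    exact ⟨(x, y - m), by simp only [mem_setOf_eq]; linarith,
      (pr_eq _ _).mpr ⟨⟨0, by simp⟩, ⟨-m, by push_cast; ring⟩⟩⟩

lemma mem_N3 (x y : ℝ) : pr (x, y) ∈ pr '' {p : ℝ × ℝ | p.2 = p.1} ↔ ∃ m : ℤ, x - y = m := by
  constructor
  · rintro ⟨⟨u, v⟩, hu, hpr⟩
    simp only [mem_setOf_eq] at hu
    obtain ⟨⟨a, ha⟩, ⟨b, hb⟩⟩ := (pr_eq _ _).mp hpr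
    exact ⟨b - a, by push_cast; simp at ha hb; linarith⟩
  · rintro ⟨m, hm⟩
    exact ⟨(x, y + m), by simp only [mem_setOf_eq]; linarith,
      (pr_eq _ _).mpr ⟨⟨0, by simp⟩, ⟨m, by push_cast; ring⟩⟩⟩

def Tri (n m : ℤ) : Set (ℝ × ℝ) :=
  {p | (0 < p.1 + 2*p.2 ∧ p.1 + 2*p.2 < 1) ∧
       ((n:ℝ) < 2*p.1 + p.2 ∧ 2*p.1 + p.2 < n + 1) ∧
       ((m:ℝ) < p.1 - p.2 ∧ p.1 - p.2 < m + 1)}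

lemma cc_lt {c fp fq a b : ℝ} (ha : 0 ≤ a) (hb : 0 ≤ b) (hab : a + b = 1)
    (hp : c < fp) (hq : c < fq) : c < a*fp + b*fq := by
  rcases eq_or_lt_of_le ha with h | h
  · have hb1 : b = 1 := by linarith
    rw [← h, hb1]; simpa using hq
  · have k1 := mul_lt_mul_of_pos_left hp h
    have k2 := mul_le_mul_of_nonneg_left hq.le hb
    have k3 : a*c + b*c = c := by rw [← add_mul, hab, one_mul]
    linarith

lemma cc_gt {c fp fq a b : ℝ} (ha : 0 ≤ a) (hb : 0 ≤ b) (hab : a + b = 1)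
    (hp : fp < c) (hq : fq < c) : a*fp + b*fq < c := by
  have := cc_lt ha hb hab (neg_lt_neg hp) (neg_lt_neg hq); linarith

lemma convex_Tri (n m : ℤ) : Convex ℝ (Tri n m) := by
  intro p hp q hq a b ha hb hab
  obtain ⟨⟨h1, h2⟩, ⟨h3, h4⟩, ⟨h5, h6⟩⟩ := hp
  obtain ⟨⟨g1, g2⟩, ⟨g3, g4⟩, ⟨g5, g6⟩⟩ := hq
  have e1 : (a • p + b • q).1 = a * p.1 + b * q.1 := rfl
  have e2 : (a • p + b • q).2 = a * p.2 + b * q.2 := rfl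
  refine ⟨⟨?_, ?_⟩, ⟨?_, ?_⟩, ⟨?_, ?_⟩⟩ <;> rw [e1, e2]
  · have := cc_lt ha hb hab h1 g1; linarith
  · have := cc_gt ha hb hab h2 g2; linarith
  · have := cc_lt ha hb hab h3 g3; linarith
  · have := cc_gt ha hb hab h4 g4; linarith
  · have := cc_lt ha hb hab h5 g5; linarith
  · have := cc_gt ha hb hab h6 g6; linarith

noncomputable def ptT (n : ℤ) (σ : Bool) : ℝ × ℝ :=
  if σ then ((2*((n:ℝ)+1/2) - 1/4)/3, (2*(1/4) - ((n:ℝ)+1/2))/3)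
  else ((2*((n:ℝ)+1/4) - 1/2)/3, (2*(1/2) - ((n:ℝ)+1/4))/3)

lemma ptT_mem (n : ℤ) (σ : Bool) : ptT n σ ∈ Tri n (if σ then n else n - 1) := by
  cases σ <;> simp only [ptT, Tri, if_true, if_false, Set.mem_setOf_eq, Bool.false_eq_true] <;>
    push_cast <;>
    refine ⟨⟨by linarith, by linarith⟩, ⟨by linarith, by linarith⟩, ⟨by linarith, by linarith⟩⟩

lemma coverage (x y : ℝ) (h1 : ∀ m : ℤ, x + 2*y ≠ m) (h2 : ∀ m : ℤ, 2*x + y ≠ m)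
    (h3 : ∀ m : ℤ, x - y ≠ m) :
    ∃ (n : ℤ) (σ : Bool), 0 ≤ n ∧ n < 3 ∧
      ∃ p ∈ Tri n (if σ then n else n - 1), pr p = pr (x, y) := by
  set f₁ := x + 2*y with hf₁
  set f₂ := 2*x + y with hf₂
  set m₁ := ⌊f₁⌋ with hm₁
  set m₂ := ⌊f₂⌋ with hm₂
  set k : ℤ := (m₁ + m₂) / 3 with hk
  set r : ℤ := m₁ + m₂ - 3*k with hr
  have hr0 : 0 ≤ r ∧ r < 3 := by omega
  set a : ℤ := m₁ - 2*k with ha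
  set b : ℤ := k - m₁ with hb
  set p : ℝ × ℝ := (x + a, y + b) with hp
  have hpr : pr p = pr (x, y) := (pr_eq _ _).mpr ⟨⟨a, rfl⟩, ⟨b, rfl⟩⟩
  -- bounds
  have hb1 : (m₁ : ℝ) ≤ f₁ := Int.floor_le f₁
  have hb2 : f₁ < m₁ + 1 := Int.lt_floor_add_one f₁
  have hb3 : (m₂ : ℝ) ≤ f₂ := Int.floor_le f₂
  have hb4 : f₂ < m₂ + 1 := Int.lt_floor_add_one f₂
  have hne1 : f₁ ≠ m₁ := h1 m₁
  have hne2 : f₂ ≠ m₂ := h2 m₂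
  have e1 : p.1 + 2*p.2 = f₁ - m₁ := by
    simp only [hp]; push_cast; rw [hf₁]; push_cast [ha, hb]; ring
  have e2 : 2*p.1 + p.2 = f₂ - m₂ + r := by
    simp only [hp]; push_cast; rw [hf₂]; push_cast [ha, hb, hr, hk]; ring
  have e3 : p.1 - p.2 = (f₂ - m₂) - (f₁ - m₁) + r := by
    simp only [hp]; push_cast; rw [hf₁, hf₂]; push_cast [ha, hb, hr, hk]; ring
  have hne3 : (f₂ - m₂) - (f₁ - m₁) ≠ 0 := by
    intro h
    apply h3 (m₂ - m₁)
    have h' : f₂ - f₁ = (m₂:ℝ) - m₁ := by linarith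
    rw [hf₁, hf₂] at h'
    push_cast
    linarith
  have c1 : 0 < f₁ - m₁ := lt_of_le_of_ne (by linarith) (fun h => hne1 (by linarith))
  have c2 : f₁ - m₁ < 1 := by linarith
  have c3 : 0 < f₂ - m₂ := lt_of_le_of_ne (by linarith) (fun h => hne2 (by linarith))
  have c4 : f₂ - m₂ < 1 := by linarith
  rcases lt_or_gt_of_ne hne3 with hσ | hσ
  · refine ⟨r, false, hr0.1, hr0.2, p, ?_, hpr⟩
    simp only [Tri, Set.mem_setOf_eq, if_neg (by simp : ¬(false = true))]
    push_cast
    refine ⟨⟨by rw [e1]; linarith, by rw [e1]; linarith⟩,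
      ⟨by rw [e2]; linarith, by rw [e2]; linarith⟩,
      ⟨by rw [e3]; linarith, by rw [e3]; linarith⟩⟩
  · refine ⟨r, true, hr0.1, hr0.2, p, ?_, hpr⟩
    simp only [Tri, Set.mem_setOf_eq, if_pos rfl]
    push_cast
    refine ⟨⟨by rw [e1]; linarith, by rw [e1]; linarith⟩,
      ⟨by rw [e2]; linarith, by rw [e2]; linarith⟩,
      ⟨by rw [e3]; linarith, by rw [e3]; linarith⟩⟩

lemma tri_disj {n m n' m' : ℤ} (hmm : m = n ∨ m = n - 1) (hmm' : m' = n' ∨ m' = n' - 1)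
    (hnr : 0 ≤ n) (hnr3 : n < 3) (hnr' : 0 ≤ n') (hnr3' : n' < 3)
    (hne : ¬(n = n' ∧ m = m')) {p q : ℝ × ℝ}
    (hp : p ∈ Tri n m) (hq : q ∈ Tri n' m') : pr p ≠ pr q := by
  intro h
  obtain ⟨⟨a, ha⟩, ⟨b, hb⟩⟩ := (pr_eq _ _).mp h
  obtain ⟨⟨h1, h2⟩, ⟨h3, h4⟩, ⟨h5, h6⟩⟩ := hp
  obtain ⟨⟨g1, g2⟩, ⟨g3, g4⟩, ⟨g5, g6⟩⟩ := hq
  rw [ha, hb] at h1 h2 h3 h4 h5 h6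
  -- a + 2b = 0
  have d1 : (-1 : ℝ) < a + 2*b := by push_cast; linarith
  have d2 : (a : ℝ) + 2*b < 1 := by push_cast; linarith
  have d1' : -1 < a + 2*b := by exact_mod_cast d1
  have d2' : a + 2*b < 1 := by exact_mod_cast d2
  have d3 : (n : ℝ) - n' - 1 < 2*a + b := by push_cast; linarith
  have d4 : (2*a + b : ℝ) < n - n' + 1 := by push_cast; linarith
  have d3' : n - n' - 1 < 2*a + b := by exact_mod_cast d3
  have d4' : 2*a + b < n - n' + 1 := by exact_mod_cast d4
  have hab : a = 0 ∧ b = 0 ∧ n = n' := by omega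
  obtain ⟨ha0, hb0, hnn⟩ := hab
  have hm : m ≠ m' := fun hmeq => hne ⟨hnn, hmeq⟩
  rw [ha0, hb0] at h5 h6
  push_cast at h5 h6
  simp at h5 h6
  -- q.1 - q.2 in (m, m+1) and (m', m'+1)
  have d5 : (m : ℝ) < m' + 1 := by linarith
  have d6 : (m' : ℝ) < m + 1 := by linarith
  have d5' : m < m' + 1 := by exact_mod_cast d5
  have d6' : m' < m + 1 := by exact_mod_cast d6
  omega

lemma in_P (x y : ℝ) (h1 : ∃ m : ℤ, x + 2*y = m) (h2 : ∃ m : ℤ, 2*x + y = m) :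
    pr (x, y) = pr (0, 0) ∨ pr (x, y) = pr (1/3, 1/3) ∨ pr (x, y) = pr (2/3, 2/3) := by
  obtain ⟨m, hm⟩ := h1
  obtain ⟨n, hn⟩ := h2
  set j : ℤ := 2*n - m with hj
  have hx : x = (j : ℝ) / 3 := by push_cast [hj]; linarith
  have hy : y = (j : ℝ) / 3 - (n - m) := by push_cast [hj]; linarith
  set d : ℤ := j / 3 with hd
  set r : ℤ := j - 3*d with hrr
  have hr : r = 0 ∨ r = 1 ∨ r = 2 := by omega
  have key : pr (x, y) = pr ((r:ℝ)/3, (r:ℝ)/3) := by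
    refine (pr_eq _ _).mpr ⟨⟨d, ?_⟩, ⟨d - n + m, ?_⟩⟩
    · rw [hx]; push_cast [hrr]; ring
    · rw [hy]; push_cast [hrr]; ring
  rcases hr with h | h | h
  · left; rw [key, h]; norm_num
  · right; left; rw [key, h]; norm_num
  · right; right; rw [key, h]; norm_num


lemma components_card {X ι : Type*} [TopologicalSpace X] [Fintype ι]
    (V : ι → Set X) (K : Set X) (hK : K = ⋃ i, V i)
    (hopen : ∀ i, IsOpen (V i)) (hconn : ∀ i, IsPreconnected (V i))
    (z : ι → X) (hz : ∀ i, z i ∈ V i)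
    (hdisj : ∀ i j, i ≠ j → V i ∩ V j = ∅) :
    Nat.card (ConnectedComponents K) = Nat.card ι := by
  classical
  set W : ι → Set K := fun i => Subtype.val ⁻¹' V i with hW
  have hcover : ∀ u : K, ∃ i, u ∈ W i := by
    intro u
    obtain ⟨i, hi⟩ := mem_iUnion.mp ((subset_of_eq hK) u.2 : (u : X) ∈ ⋃ i, V i)
    exact ⟨i, hi⟩
  have hWopen : ∀ i, IsOpen (W i) := fun i => (hopen i).preimage continuous_subtype_val
  have hWdisj : ∀ i j, i ≠ j → ∀ u, u ∈ W i → u ∉ W j := by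
    intro i j hij u hi hj
    have : (u : X) ∈ V i ∩ V j := ⟨hi, hj⟩
    rw [hdisj i j hij] at this
    exact this
  have hWclosed : ∀ i, IsClosed (W i) := by
    intro i
    rw [← isOpen_compl_iff]
    have : (W i)ᶜ = ⋃ j ∈ ({i}ᶜ : Set ι), W j := by
      ext u
      simp only [mem_compl_iff, mem_iUnion, mem_singleton_iff]
      constructor
      · intro hu
        obtain ⟨j, hj⟩ := hcover u
        exact ⟨j, fun h => hu (h ▸ hj), hj⟩
      · rintro ⟨j, hji, hj⟩ hu
        exact hWdisj i j (fun h => hji h.symm) u hu hj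
    rw [this]
    exact isOpen_biUnion fun j _ => hWopen j
  have hVK : ∀ i, V i ⊆ K := by
    intro i
    rw [hK]; exact subset_iUnion V i
  have hWconn : ∀ i, IsPreconnected (W i) := by
    intro i
    rw [← Topology.IsInducing.subtypeVal.isPreconnected_image]
    rw [hW]
    have : Subtype.val '' (Subtype.val ⁻¹' V i : Set K) = V i := by
      rw [Subtype.image_preimage_coe]
      exact inter_eq_right.mpr (hVK i)
    rw [this]
    exact hconn i
  have hcompW : ∀ (u : K) i, u ∈ W i → connectedComponent u = W i := by
    intro u i hu
    refine subset_antisymm ?_ ((hWconn i).subset_connectedComponent hu)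
    exact IsClopen.connectedComponent_subset ⟨hWclosed i, hWopen i⟩ hu
  set uz : ι → K := fun i => ⟨z i, hVK i (hz i)⟩ with huz
  have huzW : ∀ i, uz i ∈ W i := fun i => hz i
  have hbij : Function.Bijective fun i => (ConnectedComponents.mk (uz i)) := by
    constructor
    · intro i j hij
      rw [ConnectedComponents.coe_eq_coe, hcompW _ i (huzW i), hcompW _ j (huzW j)] at hij
      by_contra hne
      exact hWdisj i j hne (uz i) (huzW i) (hij ▸ huzW i)
    · intro c
      obtain ⟨u, rfl⟩ := ConnectedComponents.surjective_coe c
      obtain ⟨i, hi⟩ := hcover u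
      exact ⟨i, by rw [ConnectedComponents.coe_eq_coe, hcompW _ i (huzW i), hcompW _ i hi]⟩
  exact (Nat.card_eq_of_bijective _ hbij).symm

lemma pr_surj (z : AddCircle (1:ℝ) × AddCircle (1:ℝ)) : ∃ x y : ℝ, pr (x, y) = z := by
  obtain ⟨x, hx⟩ := QuotientAddGroup.mk_surjective z.1
  obtain ⟨y, hy⟩ := QuotientAddGroup.mk_surjective z.2
  exact ⟨x, y, Prod.ext hx hy⟩

lemma isOpen_Tri (n m : ℤ) : IsOpen (Tri n m) := by
  have c1 : Continuous fun p : ℝ × ℝ => p.1 + 2*p.2 := by fun_prop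
  have c2 : Continuous fun p : ℝ × ℝ => 2*p.1 + p.2 := by fun_prop
  have c3 : Continuous fun p : ℝ × ℝ => p.1 - p.2 := by fun_prop
  have h : Tri n m = ((fun p : ℝ × ℝ => p.1 + 2*p.2) ⁻¹' Ioo 0 1) ∩
      ((fun p : ℝ × ℝ => 2*p.1 + p.2) ⁻¹' Ioo (n : ℝ) (n + 1)) ∩
      ((fun p : ℝ × ℝ => p.1 - p.2) ⁻¹' Ioo (m : ℝ) (m + 1)) := by
    ext p
    simp only [Tri, mem_setOf_eq, mem_inter_iff, mem_preimage, mem_Ioo]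
    tauto
  rw [h]
  exact ((isOpen_Ioo.preimage c1).inter (isOpen_Ioo.preimage c2)).inter (isOpen_Ioo.preimage c3)

lemma continuous_pr : Continuous pr :=
  (QuotientAddGroup.continuous_mk.comp continuous_fst).prodMk
    (QuotientAddGroup.continuous_mk.comp continuous_snd)

lemma isOpenMap_pr : IsOpenMap pr :=
  QuotientAddGroup.isOpenMap_coe.prodMap QuotientAddGroup.isOpenMap_coe

noncomputable def VV (i : Fin 3 × Bool) : Set (AddCircle (1:ℝ) × AddCircle (1:ℝ)) :=
  pr '' Tri ((i.1 : ℕ) : ℤ) (if i.2 then ((i.1 : ℕ) : ℤ) else ((i.1 : ℕ) : ℤ) - 1)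

/-- In the torus `T² = ℝ²/ℤ²`, the images of the lines `x = -2y`, `y = -2x`
and `y = x` pairwise and triply intersect exactly in the three points `(0,0)`,
`(1/3,1/3)`, `(2/3,2/3)` (mod `ℤ²`), and the complement of their union has exactly `6`
connected components. -/
theorem toric_arrangement_three_lines_six_chambers
    (π : ℝ × ℝ → AddCircle (1 : ℝ) × AddCircle (1 : ℝ))
    (hπ : π = fun p => ((p.1 : AddCircle (1 : ℝ)), (p.2 : AddCircle (1 : ℝ))))
    (N₁ N₂ N₃ P : Set (AddCircle (1 : ℝ) × AddCircle (1 : ℝ)))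
    (hN₁ : N₁ = π '' {p : ℝ × ℝ | p.1 = -2 * p.2})
    (hN₂ : N₂ = π '' {p : ℝ × ℝ | p.2 = -2 * p.1})
    (hN₃ : N₃ = π '' {p : ℝ × ℝ | p.2 = p.1})
    (hP : P = {π (0, 0), π (1/3, 1/3), π (2/3, 2/3)}) :
    N₁ ∩ N₂ = P ∧ N₁ ∩ N₃ = P ∧ N₂ ∩ N₃ = P ∧ N₁ ∩ N₂ ∩ N₃ = P ∧
      Nat.card (ConnectedComponents ((N₁ ∪ N₂ ∪ N₃)ᶜ :
        Set (AddCircle (1 : ℝ) × AddCircle (1 : ℝ)))) = 6 := by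
  have hπ' : π = pr := hπ
  subst hπ'
  subst hN₁ hN₂ hN₃ hP
  -- membership in P
  have hPmem : ∀ z, z ∈ ({pr (0, 0), pr (1/3, 1/3), pr (2/3, 2/3)} :
      Set (AddCircle (1:ℝ) × AddCircle (1:ℝ))) ↔
      z = pr (0, 0) ∨ z = pr (1/3, 1/3) ∨ z = pr (2/3, 2/3) := by
    intro z; simp [Set.mem_insert_iff]
  -- P is contained in all three circles
  have hPsub1 : ({pr (0, 0), pr (1/3, 1/3), pr (2/3, 2/3)} :
      Set (AddCircle (1:ℝ) × AddCircle (1:ℝ))) ⊆ pr '' {p : ℝ × ℝ | p.1 = -2 * p.2} := by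
    intro z hz
    rcases (hPmem z).mp hz with rfl | rfl | rfl
    · exact (mem_N1 0 0).mpr ⟨0, by norm_num⟩
    · exact (mem_N1 (1/3) (1/3)).mpr ⟨1, by norm_num⟩
    · exact (mem_N1 (2/3) (2/3)).mpr ⟨2, by norm_num⟩
  have hPsub2 : ({pr (0, 0), pr (1/3, 1/3), pr (2/3, 2/3)} :
      Set (AddCircle (1:ℝ) × AddCircle (1:ℝ))) ⊆ pr '' {p : ℝ × ℝ | p.2 = -2 * p.1} := by
    intro z hz
    rcases (hPmem z).mp hz with rfl | rfl | rfl
    · exact (mem_N2 0 0).mpr ⟨0, by norm_num⟩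
    · exact (mem_N2 (1/3) (1/3)).mpr ⟨1, by norm_num⟩
    · exact (mem_N2 (2/3) (2/3)).mpr ⟨2, by norm_num⟩
  have hPsub3 : ({pr (0, 0), pr (1/3, 1/3), pr (2/3, 2/3)} :
      Set (AddCircle (1:ℝ) × AddCircle (1:ℝ))) ⊆ pr '' {p : ℝ × ℝ | p.2 = p.1} := by
    intro z hz
    rcases (hPmem z).mp hz with rfl | rfl | rfl
    · exact (mem_N3 0 0).mpr ⟨0, by norm_num⟩
    · exact (mem_N3 (1/3) (1/3)).mpr ⟨0, by norm_num⟩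
    · exact (mem_N3 (2/3) (2/3)).mpr ⟨0, by norm_num⟩
  have h12 : pr '' {p : ℝ × ℝ | p.1 = -2 * p.2} ∩ pr '' {p : ℝ × ℝ | p.2 = -2 * p.1} =
      ({pr (0, 0), pr (1/3, 1/3), pr (2/3, 2/3)} :
        Set (AddCircle (1:ℝ) × AddCircle (1:ℝ))) := by
    ext z
    constructor
    · rintro ⟨hz1, hz2⟩
      obtain ⟨x, y, rfl⟩ := pr_surj z
      exact (hPmem _).mpr (in_P x y ((mem_N1 x y).mp hz1) ((mem_N2 x y).mp hz2))
    · intro hz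
      exact ⟨hPsub1 hz, hPsub2 hz⟩
  have h13 : pr '' {p : ℝ × ℝ | p.1 = -2 * p.2} ∩ pr '' {p : ℝ × ℝ | p.2 = p.1} =
      ({pr (0, 0), pr (1/3, 1/3), pr (2/3, 2/3)} :
        Set (AddCircle (1:ℝ) × AddCircle (1:ℝ))) := by
    ext z
    constructor
    · rintro ⟨hz1, hz3⟩
      obtain ⟨x, y, rfl⟩ := pr_surj z
      obtain ⟨m, hm⟩ := (mem_N1 x y).mp hz1
      obtain ⟨k, hk⟩ := (mem_N3 x y).mp hz3
      exact (hPmem _).mpr (in_P x y ⟨m, hm⟩ ⟨m + k, by push_cast; linarith⟩)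
    · intro hz
      exact ⟨hPsub1 hz, hPsub3 hz⟩
  have h23 : pr '' {p : ℝ × ℝ | p.2 = -2 * p.1} ∩ pr '' {p : ℝ × ℝ | p.2 = p.1} =
      ({pr (0, 0), pr (1/3, 1/3), pr (2/3, 2/3)} :
        Set (AddCircle (1:ℝ) × AddCircle (1:ℝ))) := by
    ext z
    constructor
    · rintro ⟨hz2, hz3⟩
      obtain ⟨x, y, rfl⟩ := pr_surj z
      obtain ⟨n, hn⟩ := (mem_N2 x y).mp hz2
      obtain ⟨k, hk⟩ := (mem_N3 x y).mp hz3
      exact (hPmem _).mpr (in_P x y ⟨n - k, by push_cast; linarith⟩ ⟨n, hn⟩)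
    · intro hz
      exact ⟨hPsub2 hz, hPsub3 hz⟩
  have h123 : pr '' {p : ℝ × ℝ | p.1 = -2 * p.2} ∩ pr '' {p : ℝ × ℝ | p.2 = -2 * p.1} ∩
      pr '' {p : ℝ × ℝ | p.2 = p.1} =
      ({pr (0, 0), pr (1/3, 1/3), pr (2/3, 2/3)} :
        Set (AddCircle (1:ℝ) × AddCircle (1:ℝ))) := by
    apply subset_antisymm
    · intro z hz
      rw [← h12]
      exact hz.1
    · intro z hz
      exact ⟨⟨hPsub1 hz, hPsub2 hz⟩, hPsub3 hz⟩
  refine ⟨h12, h13, h23, h123, ?_⟩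
  -- the complement
  have hC : (pr '' {p : ℝ × ℝ | p.1 = -2 * p.2} ∪ pr '' {p : ℝ × ℝ | p.2 = -2 * p.1} ∪
      pr '' {p : ℝ × ℝ | p.2 = p.1})ᶜ = ⋃ i : Fin 3 × Bool, VV i := by
    ext z
    simp only [Set.mem_compl_iff, Set.mem_union, not_or, Set.mem_iUnion]
    constructor
    · rintro ⟨⟨hz1, hz2⟩, hz3⟩
      obtain ⟨x, y, rfl⟩ := pr_surj z
      have k1 : ∀ m : ℤ, x + 2*y ≠ m := fun m hm => hz1 ((mem_N1 x y).mpr ⟨m, hm⟩)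
      have k2 : ∀ m : ℤ, 2*x + y ≠ m := fun m hm => hz2 ((mem_N2 x y).mpr ⟨m, hm⟩)
      have k3 : ∀ m : ℤ, x - y ≠ m := fun m hm => hz3 ((mem_N3 x y).mpr ⟨m, hm⟩)
      obtain ⟨n, σ, hn0, hn3, p, hp, hppr⟩ := coverage x y k1 k2 k3
      refine ⟨(⟨n.toNat, by omega⟩, σ), ?_⟩
      have hcast : ((((⟨n.toNat, by omega⟩ : Fin 3) : ℕ)) : ℤ) = n := by
        simp [Int.toNat_of_nonneg hn0]
      rw [VV]
      simp only [hcast]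
      exact ⟨p, hp, hppr⟩
    · rintro ⟨i, hi⟩
      obtain ⟨p, hp, rfl⟩ := hi
      obtain ⟨⟨t1, t2⟩, ⟨t3, t4⟩, ⟨t5, t6⟩⟩ := hp
      refine ⟨⟨?_, ?_⟩, ?_⟩
      · intro hmem
        obtain ⟨m, hm⟩ := (mem_N1 p.1 p.2).mp hmem
        have l1 : (0:ℝ) < m := by linarith
        have l2 : (m:ℝ) < 1 := by linarith
        have l1' : (0:ℤ) < m := by exact_mod_cast l1
        have l2' : m < 1 := by exact_mod_cast l2
        omega
      · intro hmem
        obtain ⟨m, hm⟩ := (mem_N2 p.1 p.2).mp hmem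
        set n : ℤ := ((i.1 : ℕ) : ℤ)
        have l1 : (n:ℝ) < m := by linarith
        have l2 : (m:ℝ) < n + 1 := by push_cast; linarith
        have l1' : n < m := by exact_mod_cast l1
        have l2' : (m:ℤ) < n + 1 := by exact_mod_cast l2
        omega
      · intro hmem
        obtain ⟨m, hm⟩ := (mem_N3 p.1 p.2).mp hmem
        set mm : ℤ := if i.2 then ((i.1 : ℕ) : ℤ) else ((i.1 : ℕ) : ℤ) - 1
        have l1 : (mm:ℝ) < m := by linarith
        have l2 : (m:ℝ) < mm + 1 := by push_cast; linarith
        have l1' : mm < m := by exact_mod_cast l1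
        have l2' : (m:ℤ) < mm + 1 := by exact_mod_cast l2
        omega
  rw [hC]
  have hcard := components_card VV (⋃ i : Fin 3 × Bool, VV i) rfl
    (fun i => isOpenMap_pr _ (isOpen_Tri _ _))
    (fun i => ((convex_Tri _ _).isPreconnected).image pr continuous_pr.continuousOn)
    (fun i => pr (ptT ((i.1 : ℕ) : ℤ) i.2))
    (fun i => Set.mem_image_of_mem pr (ptT_mem ((i.1 : ℕ) : ℤ) i.2))
    ?_
  · rw [hcard]
    simp [Nat.card_eq_fintype_card]
  · -- disjointness
    intro i j hij
    rw [Set.eq_empty_iff_forall_notMem]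
    rintro z ⟨⟨p, hp, rfl⟩, ⟨q, hq, hq'⟩⟩
    have hi1 : (0:ℤ) ≤ ((i.1 : ℕ) : ℤ) := by positivity
    have hi2 : (((i.1 : ℕ)) : ℤ) < 3 := by exact_mod_cast i.1.isLt
    have hj1 : (0:ℤ) ≤ ((j.1 : ℕ) : ℤ) := by positivity
    have hj2 : (((j.1 : ℕ)) : ℤ) < 3 := by exact_mod_cast j.1.isLt
    refine tri_disj ?_ ?_ hi1 hi2 hj1 hj2 ?_ hp hq hq'.symm
    · cases i.2 <;> simp
    · cases j.2 <;> simp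
    · rintro ⟨e1, e2⟩
      apply hij
      have hfin : i.1 = j.1 := by
        apply Fin.ext
        exact_mod_cast e1
      have hbool : i.2 = j.2 := by
        rw [e1] at e2
        rcases hi2σ : i.2 <;> rcases hj2σ : j.2 <;> simp [hi2σ, hj2σ] at e2 <;> first | rfl | omega
      exact Prod.ext hfin hbool
end

section
/- Let D be a finite distributive lattice with a valuation φ, and let P ⊆ D be a subset containing the minimum 0̂ and every join-irreducible element of D. Then for any t ∈ P that is neither 0̂ nor join-irreducible in D, Σ_{s ∈ P, s ≤ t} μ_P(s,t) φ(s) = 0, where μ_P is the Möbius function of the induced subposet P. -/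
open scoped Classical

/-!
Write `F t = ∑_{s ≤ t} μ_P(s,t) φ(s)`, so that Möbius inversion gives `∑_{s ≤ t} F s = φ t` on `P`.
Call `s` basic if it is `⊥` or join-irreducible. Join-irreducibles of a distributive lattice are
join-prime, so `y ↦ ∑_{s basic, s ≤ y} F s` is again modular. By strong induction on `t`, `F`
vanishes on the non-basic elements below `t`; then this modular function agrees with `φ` on the
basic elements below `t`, hence everywhere below `t`, and comparing the two at `t` leaves `F t = 0`.
-/

open Finset

section Moebius

variable {α : Type*} [PartialOrder α] [Fintype α] {μ : α → α → ℤ}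

theorem sum_moebius_filter_Icc (hμ_refl : ∀ s, μ s s = 1)
    (hμ_lt : ∀ s t, s < t → μ s t = -∑ u ∈ univ.filter (fun u => s ≤ u ∧ u < t), μ s u)
    (u t : α) :
    ∑ s ∈ univ.filter (fun s => u ≤ s ∧ s ≤ t), μ u s = if u = t then 1 else 0 := by
  rcases eq_or_ne u t with rfl | hne
  · have : univ.filter (fun s => u ≤ s ∧ s ≤ u) = {u} := by
      ext s; simp [le_antisymm_iff, and_comm]
    simp [this, hμ_refl]
  rw [if_neg hne]
  by_cases hut : u ≤ t
  · have : univ.filter (fun s => u ≤ s ∧ s ≤ t) =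
        insert t (univ.filter (fun s => u ≤ s ∧ s < t)) := by
      ext s; simp only [mem_filter, mem_univ, true_and, mem_insert, le_iff_eq_or_lt (b := t)]
      grind
    rw [this, sum_insert (by simp), hμ_lt u t (lt_of_le_of_ne hut hne), neg_add_cancel]
  · exact sum_eq_zero fun s hs => absurd ((mem_filter.1 hs).2.1.trans (mem_filter.1 hs).2.2) hut

theorem moebius_inversion {R : Type*} [Ring R] (hμ_refl : ∀ s, μ s s = 1)
    (hμ_lt : ∀ s t, s < t → μ s t = -∑ u ∈ univ.filter (fun u => s ≤ u ∧ u < t), μ s u)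
    (f : α → R) (t : α) :
    ∑ s ∈ univ.filter (· ≤ t), ∑ u ∈ univ.filter (· ≤ s), (μ u s : R) * f u = f t := by
  calc ∑ s ∈ univ.filter (· ≤ t), ∑ u ∈ univ.filter (· ≤ s), (μ u s : R) * f u
      = ∑ u ∈ univ.filter (· ≤ t), ∑ s ∈ univ.filter (fun s => u ≤ s ∧ s ≤ t),
          (μ u s : R) * f u := by
        refine sum_comm' fun s u => ?_
        simp only [mem_filter, mem_univ, true_and]
        exact ⟨fun h => ⟨⟨h.2, h.1⟩, h.2.trans h.1⟩, fun h => ⟨h.1.2, h.1.1⟩⟩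
    _ = ∑ u ∈ univ.filter (· ≤ t), (if u = t then 1 else 0 : R) * f u := by
        refine sum_congr rfl fun u _ => ?_
        rw [← sum_mul, ← Int.cast_sum, sum_moebius_filter_Icc hμ_refl hμ_lt]
        split_ifs <;> simp
    _ = f t := by simp

end Moebius

section ModularFunction

variable {D : Type*} [Lattice D]

theorem sum_filter_le_sup_add_sum_filter_le_inf {ι M : Type*} [AddCommMonoid M]
    (s : Finset ι) (e : ι → D) (he : ∀ i ∈ s, ∀ a b, e i ≤ a ⊔ b → e i ≤ a ∨ e i ≤ b)
    (f : ι → M) (a b : D) :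
    ∑ i ∈ s.filter (e · ≤ a ⊔ b), f i + ∑ i ∈ s.filter (e · ≤ a ⊓ b), f i =
      ∑ i ∈ s.filter (e · ≤ a), f i + ∑ i ∈ s.filter (e · ≤ b), f i := by
  have hsup : s.filter (e · ≤ a ⊔ b) = s.filter (e · ≤ a) ∪ s.filter (e · ≤ b) := by
    rw [← filter_or]
    exact filter_congr fun i hi =>
      ⟨he i hi a b, fun h => h.elim (le_sup_of_le_left ·) (le_sup_of_le_right ·)⟩
  simp only [hsup, le_inf_iff, filter_and, sum_union_inter]

theorem eq_of_modular_of_eq_on_supIrred [WellFoundedLT D] {M : Type*} [AddCommGroup M]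
    {f g : D → M} (hf : ∀ x y, f (x ⊔ y) + f (x ⊓ y) = f x + f y)
    (hg : ∀ x y, g (x ⊔ y) + g (x ⊓ y) = g x + g y) {x : D}
    (h : ∀ j ≤ x, IsMin j ∨ SupIrred j → f j = g j) : f x = g x := by
  induction x using WellFoundedLT.induction with
  | _ x ih =>
    by_cases hx : IsMin x ∨ SupIrred x
    · exact h x le_rfl hx
    obtain ⟨a, b, rfl, ha, hb⟩ := (not_supIrred.1 (not_or.1 hx).2).resolve_left (not_or.1 hx).1
    have hab : a ⊓ b < a ⊔ b := inf_le_left.trans_lt ha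
    have eq_below {y} (hy : y < a ⊔ b) : f y = g y :=
      ih y hy fun j hj => h j (hj.trans hy.le)
    have hfab := hf a b
    rw [eq_below ha, eq_below hb, eq_below hab, ← hg a b] at hfab
    exact add_right_cancel hfab

end ModularFunction

theorem eq_zero_of_sum_filter_le_eq_modular {D R : Type*} [DistribLattice D] [WellFoundedLT D]
    [AddCommGroup R] (P : Set D) [Fintype P] (φ : D → R)
    (hφ : ∀ x y, φ (x ⊔ y) + φ (x ⊓ y) = φ x + φ y)
    (hP : ∀ a : D, IsMin a ∨ SupIrred a → a ∈ P)
    (F : P → R) (hF : ∀ t : P, ∑ s ∈ univ.filter (· ≤ t), F s = φ t)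
    (t : P) (ht : ¬ (IsMin (t : D) ∨ SupIrred (t : D))) : F t = 0 := by
  set basic : P → Prop := fun s => IsMin (s : D) ∨ SupIrred (s : D)
  set ψ : D → R := fun y => ∑ s ∈ (univ.filter basic).filter ((· ≤ y) ∘ (↑)), F s
  have hψ : ∀ x y, ψ (x ⊔ y) + ψ (x ⊓ y) = ψ x + ψ y := by
    refine sum_filter_le_sup_add_sum_filter_le_inf _ _ (fun s hs a b hle => ?_) F
    rcases (mem_filter.1 hs).2 with hmin | hirr
    · exact Or.inl (hmin.isBot a)
    · exact hirr.supPrime.2 hle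
  have hsplit : ∀ s : P,
      φ s = ψ s + ∑ u ∈ (univ.filter (· ≤ s)).filter (¬ basic ·), F u := by
    intro s
    rw [← hF, ← sum_filter_add_sum_filter_not _ basic, filter_comm]
    rfl
  induction t using WellFoundedLT.induction with
  | _ t ih =>
    have hφψ : φ t = ψ t := by
      refine eq_of_modular_of_eq_on_supIrred hφ hψ fun j hjt hj => ?_
      rw [hsplit ⟨j, hP j hj⟩, add_eq_left]
      refine sum_eq_zero fun u hu => ?_
      obtain ⟨huj, hu⟩ : u ≤ _ ∧ ¬ basic u := by simpa using hu
      exact ih u ((lt_of_le_of_ne huj (by rintro rfl; exact hu hj)).trans_le hjt) hu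
    have hrest : ∑ u ∈ (univ.filter (· ≤ t)).filter (¬ basic ·), F u = F t := by
      refine sum_eq_single_of_mem t (mem_filter.2 ⟨mem_filter.2 ⟨mem_univ t, le_rfl⟩, ht⟩)
        fun u hu hne => ?_
      obtain ⟨hut, hu⟩ : u ≤ t ∧ ¬ basic u := by simpa using hu
      exact ih u (lt_of_le_of_ne hut hne) hu
    rw [hsplit, hrest] at hφψ
    exact add_eq_left.1 hφψ

open Finset in
theorem zaslavsky_valuation_identity_general
    (D : Type) [DistribLattice D] [OrderBot D] [Fintype D]
    (φ : D → ℝ)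
    (hφ : ∀ x y : D, φ (x ⊔ y) + φ (x ⊓ y) = φ x + φ y)
    (P : Set D) (hbot : ⊥ ∈ P) (hirr : ∀ a : D, SupIrred a → a ∈ P)
    (μP : P → P → ℤ)
    (hμ_refl : ∀ s : P, μP s s = 1)
    (hμ_lt : ∀ s t : P, s < t →
      μP s t = -∑ u ∈ univ.filter (fun u : P => s ≤ u ∧ u < t), μP s u)
    (t : P) (ht_bot : (t : D) ≠ ⊥) (ht_irr : ¬ SupIrred (t : D)) :
    ∑ s ∈ univ.filter (fun s : P => s ≤ t), (μP s t : ℝ) * φ s = 0 := by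
  refine eq_zero_of_sum_filter_le_eq_modular P φ hφ (fun a ha => ?_)
    (fun t => ∑ s ∈ univ.filter (· ≤ t), (μP s t : ℝ) * φ s)
    (moebius_inversion hμ_refl hμ_lt _) t (by simp [isMin_iff_eq_bot, ht_bot, ht_irr])
  rcases ha with ha | ha
  · exact isMin_iff_eq_bot.1 ha ▸ hbot
  · exact hirr a ha

open Finset in
/-- Zaslavsky's Corollary 2.2: Let `D` be a finite distributive lattice
with a valuation `φ` (`φ ⊥ = 0` and `φ(x ⊔ y) + φ(x ⊓ y) = φ x + φ y`), and let `P ⊆ D`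
contain `⊥` and every join-irreducible element of `D`.  Then for any `t ∈ P` which is
neither `⊥` nor join-irreducible, `∑_{s ∈ P, s ≤ t} μ_P(s,t) φ(s) = 0`, where `μ_P` is the
Möbius function of the induced subposet `P`. -/
theorem zaslavsky_valuation_identity
    (D : Type) [DistribLattice D] [OrderBot D] [Fintype D]
    (φ : D → ℝ)
    (hφbot : φ ⊥ = 0)
    (hφ : ∀ x y : D, φ (x ⊔ y) + φ (x ⊓ y) = φ x + φ y)
    (P : Set D) (hbot : ⊥ ∈ P) (hirr : ∀ a : D, SupIrred a → a ∈ P)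
    (μP : P → P → ℤ)
    (hμ_refl : ∀ s : P, μP s s = 1)
    (hμ_lt : ∀ s t : P, s < t →
      μP s t = -∑ u ∈ univ.filter (fun u : P => s ≤ u ∧ u < t), μP s u)
    (hμ_zero : ∀ s t : P, ¬ s ≤ t → μP s t = 0)
    (t : P) (ht_bot : (t : D) ≠ ⊥) (ht_irr : ¬ SupIrred (t : D)) :
    ∑ s ∈ univ.filter (fun s : P => s ≤ t), (μP s t : ℝ) * φ s = 0 :=
  zaslavsky_valuation_identity_general D φ hφ P hbot hirr μP hμ_refl hμ_lt t ht_bot ht_irr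
end
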